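/- arXiv:2507.08963 — 7 statements merged into one kernel-verified Lean document; each statement's English description precedes it below -/
import Mathlib

section
/- One-step contraction of conceptual BCOSW (Lemma 5.1): Suppose the aiming condition holds, and suppose α_t ≥ 0 and α_t·λ < 1 for all t ≥ 0. Then for every t ≥ 0, almost surely, E_t[‖x_{t+1} − x*‖²] ≤ (1 − α_t λ)² ‖x_t − x*‖² + α_t² B*, where B* = n + λ²‖x*‖² + 2λ‖x*‖₁. -/
/-!
Write `D = d_t / √(E_t[d_t²])` coordinatewise. The error `x_{t+1} - x*` is the `F_t`-measurable
vector `Y = (1 - αλ) x_t - x*` minus `α D`, so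
`E_t ‖x_{t+1} - x*‖² = ‖Y‖² - 2α ⟨Y, E_t D⟩ + α² ∑ E_t[D_k²]`, where `E_t[D_k²] = 1` and
`|E_t D_k| ≤ 1` by conditional Jensen. Expanding `Y = (1 - αλ)(x_t - x*) - αλ x*`, the cross term
`-2(1 - αλ)α ⟨x_t - x*, E_t D + λ x*⟩` is nonpositive by the aiming condition, and the remaining
`α²` terms are at most `α² B*`.

The delicate point is why `D` is square integrable at all: the weight `E_t[d²]⁻¹` is unbounded,
so the tower property `∫ φ g = ∫ φ E[g | m]` is extended to unbounded nonnegative `m`-measurable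
weights `φ` by monotone convergence from the truncations `min φ N`.
-/

open MeasureTheory Filter

section

variable {Ω : Type*} {m mΩ : MeasurableSpace Ω} {μ : Measure Ω}

lemma tendsto_lintegral_ofReal_min_mul {φ ψ : Ω → ℝ} (hφ : AEMeasurable φ μ)
    (hψ : AEMeasurable ψ μ) (hψ0 : 0 ≤ᵐ[μ] ψ) :
    Tendsto (fun N : ℕ => ∫⁻ ω, ENNReal.ofReal (min (φ ω) N * ψ ω) ∂μ) atTop
      (nhds (∫⁻ ω, ENNReal.ofReal (φ ω * ψ ω) ∂μ)) := by
  refine lintegral_tendsto_of_tendsto_of_monotone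
    (fun N => ((hφ.min aemeasurable_const).mul hψ).ennreal_ofReal) ?_ ?_
  · filter_upwards [hψ0] with ω hω N N' hNN'
    refine ENNReal.ofReal_le_ofReal (mul_le_mul_of_nonneg_right (min_le_min_left _ ?_) hω)
    exact_mod_cast hNN'
  · refine ae_of_all _ fun ω => tendsto_const_nhds.congr' ?_
    filter_upwards [eventually_ge_atTop ⌈φ ω⌉₊] with N hN
    rw [min_eq_left ((Nat.le_ceil _).trans (by exact_mod_cast hN))]

lemma lintegral_ofReal_mul_condExp [IsFiniteMeasure μ] (hm : m ≤ mΩ) {φ g : Ω → ℝ}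
    (hφ : StronglyMeasurable[m] φ) (hφ0 : 0 ≤ᵐ[μ] φ) (hg : Integrable g μ) (hg0 : 0 ≤ᵐ[μ] g) :
    ∫⁻ ω, ENNReal.ofReal (φ ω * g ω) ∂μ = ∫⁻ ω, ENNReal.ofReal (φ ω * μ[g|m] ω) ∂μ := by
  have hφμ : AEMeasurable φ μ := ((hφ.mono hm).aestronglyMeasurable (μ := μ)).aemeasurable
  refine tendsto_nhds_unique (tendsto_lintegral_ofReal_min_mul hφμ hg.aemeasurable hg0) ?_
  refine (tendsto_lintegral_ofReal_min_mul hφμ integrable_condExp.aemeasurable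
    (condExp_nonneg hg0)).congr fun N => ?_
  set φN : Ω → ℝ := fun ω => min (φ ω) N
  have hφN : StronglyMeasurable[m] φN := (hφ.measurable.min measurable_const).stronglyMeasurable
  have hφN0 : 0 ≤ᵐ[μ] φN := by
    filter_upwards [hφ0] with ω hω using le_min hω N.cast_nonneg
  have hφN_le : ∀ᵐ ω ∂μ, ‖φN ω‖ ≤ N := by
    filter_upwards [hφN0] with ω hω
    rw [Real.norm_eq_abs, abs_of_nonneg hω]
    exact min_le_right _ _
  have hφNμ := (hφN.mono hm).aestronglyMeasurable (μ := μ)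
  rw [← ofReal_integral_eq_lintegral_ofReal (integrable_condExp.bdd_mul hφNμ hφN_le)
      (by filter_upwards [hφN0, condExp_nonneg (m := m) hg0] with ω h1 h2 using mul_nonneg h1 h2),
    ← ofReal_integral_eq_lintegral_ofReal (hg.bdd_mul hφNμ hφN_le)
      (by filter_upwards [hφN0, hg0] with ω h1 h2 using mul_nonneg h1 h2)]
  congr 1
  calc ∫ ω, φN ω * μ[g|m] ω ∂μ = ∫ ω, μ[φN * g|m] ω ∂μ :=
        integral_congr_ae (condExp_stronglyMeasurable_mul_of_bound hm hφN hg N hφN_le).symm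
    _ = ∫ ω, φN ω * g ω ∂μ := integral_condExp hm

lemma integrable_div_condExp [IsFiniteMeasure μ] (hm : m ≤ mΩ) {g : Ω → ℝ}
    (hg : Integrable g μ) (hg0 : 0 ≤ᵐ[μ] g) (hpos : ∀ᵐ ω ∂μ, 0 < μ[g|m] ω) :
    Integrable (fun ω => g ω / μ[g|m] ω) μ := by
  have hinvm : StronglyMeasurable[m] fun ω => (μ[g|m] ω)⁻¹ :=
    stronglyMeasurable_condExp.measurable.inv.stronglyMeasurable
  have hinv0 : 0 ≤ᵐ[μ] fun ω => (μ[g|m] ω)⁻¹ := by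
    filter_upwards [hpos] with ω hω using (inv_pos.2 hω).le
  refine ⟨(hg.aemeasurable.div
    (stronglyMeasurable_condExp.mono hm).measurable.aemeasurable).aestronglyMeasurable, ?_⟩
  refine (hasFiniteIntegral_iff_ofReal ?_).2 ?_
  · filter_upwards [hg0, hpos] with ω h1 h2 using div_nonneg h1 h2.le
  calc ∫⁻ ω, ENNReal.ofReal (g ω / μ[g|m] ω) ∂μ
      = ∫⁻ ω, ENNReal.ofReal ((μ[g|m] ω)⁻¹ * μ[g|m] ω) ∂μ := by
        simp_rw [div_eq_inv_mul]
        exact lintegral_ofReal_mul_condExp hm hinvm hinv0 hg hg0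
    _ = ∫⁻ _, 1 ∂μ := lintegral_congr_ae <| by
        filter_upwards [hpos] with ω hω
        rw [inv_mul_cancel₀ hω.ne', ENNReal.ofReal_one]
    _ < ⊤ := by simp

lemma condExp_div_condExp_ae_eq_one [IsFiniteMeasure μ] (hm : m ≤ mΩ) {g : Ω → ℝ}
    (hg : Integrable g μ) (hg0 : 0 ≤ᵐ[μ] g) (hpos : ∀ᵐ ω ∂μ, 0 < μ[g|m] ω) :
    μ[fun ω => g ω / μ[g|m] ω|m] =ᵐ[μ] 1 := by
  have hint := integrable_div_condExp hm hg hg0 hpos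
  simp_rw [div_eq_inv_mul] at hint ⊢
  change Integrable ((μ[g|m])⁻¹ * g) μ at hint
  change μ[(μ[g|m])⁻¹ * g|m] =ᵐ[μ] 1
  filter_upwards [condExp_mul_of_stronglyMeasurable_left (m := m)
    stronglyMeasurable_condExp.measurable.inv.stronglyMeasurable hint hg, hpos] with ω hω hpos
  rw [Pi.mul_apply] at hω
  rw [hω, Pi.inv_apply, inv_mul_cancel₀ hpos.ne', Pi.one_apply]

lemma condExp_sq_sub_const_mul [IsFiniteMeasure μ] (hm : m ≤ mΩ) {Y D : Ω → ℝ}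
    (hYm : Measurable[m] Y) (hY : MemLp Y 2 μ) (hD : MemLp D 2 μ) (c : ℝ) :
    μ[fun ω => (Y ω - c * D ω) ^ 2|m] =ᵐ[μ]
      fun ω => Y ω ^ 2 - 2 * c * Y ω * μ[D|m] ω + c ^ 2 * μ[fun ω => D ω ^ 2|m] ω := by
  have hY2 := hY.integrable_sq
  have hYD : Integrable (Y * D) μ := hY.integrable_mul hD
  have hD2 := hD.integrable_sq
  have hexp : (fun ω => (Y ω - c * D ω) ^ 2)
      = (fun ω => Y ω ^ 2) - (2 * c) • (Y * D) + c ^ 2 • fun ω => D ω ^ 2 := by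
    ext ω
    simp only [Pi.add_apply, Pi.sub_apply, Pi.smul_apply, Pi.mul_apply, smul_eq_mul]
    ring
  rw [hexp]
  filter_upwards [condExp_add (hY2.sub (hYD.smul (2 * c))) (hD2.smul (c ^ 2)) m,
    condExp_sub hY2 (hYD.smul (2 * c)) m, condExp_smul (2 * c) (Y * D) m,
    condExp_smul (c ^ 2) (fun ω => D ω ^ 2) m,
    condExp_mul_of_stronglyMeasurable_left hYm.stronglyMeasurable hYD
      (hD.integrable one_le_two)] with ω h1 h2 h3 h4 h5
  rw [h1, Pi.add_apply, h2, Pi.sub_apply, h3, h4, Pi.smul_apply, Pi.smul_apply, h5,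
    Pi.mul_apply, condExp_of_stronglyMeasurable hm (hYm.pow_const 2).stronglyMeasurable hY2]
  simp only [smul_eq_mul]
  ring

lemma measurable_and_memLp_of_affine_recursion {F : ℕ → MeasurableSpace Ω} (hF_mono : Monotone F)
    {X D : ℕ → Ω → ℝ} {a b : ℕ → ℝ} (hX0m : Measurable[F 0] (X 0)) (hX0 : MemLp (X 0) 2 μ)
    (hDm : ∀ t, Measurable[F (t + 1)] (D t)) (hD : ∀ t, MemLp (D t) 2 μ)
    (hX : ∀ t ω, X (t + 1) ω = a t * X t ω - b t * D t ω) (t : ℕ) :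
    Measurable[F t] (X t) ∧ MemLp (X t) 2 μ := by
  induction t with
  | zero => exact ⟨hX0m, hX0⟩
  | succ t ih =>
    rw [show X (t + 1) = fun ω => a t * X t ω - b t * D t ω from funext (hX t)]
    exact ⟨((ih.1.mono (hF_mono t.le_succ) le_rfl).const_mul (a t)).sub ((hDm t).const_mul (b t)),
      (ih.2.const_mul (a t)).sub ((hD t).const_mul (b t))⟩

noncomputable def condRMSNormalize (μ : Measure Ω) (m : MeasurableSpace Ω) (f : Ω → ℝ) :
    Ω → ℝ :=
  fun ω => f ω / √(μ[fun ω' => f ω' ^ 2|m] ω)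

lemma measurable_condRMSNormalize {m' : MeasurableSpace Ω} (hmm' : m ≤ m') {f : Ω → ℝ}
    (hf : Measurable[m'] f) : Measurable[m'] (condRMSNormalize μ m f) :=
  hf.div (stronglyMeasurable_condExp.measurable.mono hmm' le_rfl).sqrt

lemma sq_condRMSNormalize_ae_eq (f : Ω → ℝ) :
    (fun ω => condRMSNormalize μ m f ω ^ 2) =ᵐ[μ]
      fun ω => f ω ^ 2 / μ[fun ω' => f ω' ^ 2|m] ω := by
  filter_upwards [condExp_nonneg (m := m) (ae_of_all μ fun ω => sq_nonneg (f ω))] with ω hω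
  rw [condRMSNormalize, div_pow, Real.sq_sqrt hω]

lemma memLp_condRMSNormalize [IsFiniteMeasure μ] (hm : m ≤ mΩ) {f : Ω → ℝ}
    (hf : MemLp f 2 μ) (hpos : ∀ᵐ ω ∂μ, 0 < μ[fun ω' => f ω' ^ 2|m] ω) :
    MemLp (condRMSNormalize μ m f) 2 μ := by
  refine (memLp_two_iff_integrable_sq (hf.1.aemeasurable.div
    (stronglyMeasurable_condExp.mono hm).measurable.aemeasurable.sqrt).aestronglyMeasurable).2 ?_
  exact (integrable_div_condExp hm hf.integrable_sq (ae_of_all μ fun ω => sq_nonneg (f ω))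
    hpos).congr (sq_condRMSNormalize_ae_eq f).symm

lemma condExp_sq_condRMSNormalize [IsFiniteMeasure μ] (hm : m ≤ mΩ) {f : Ω → ℝ}
    (hf : MemLp f 2 μ) (hpos : ∀ᵐ ω ∂μ, 0 < μ[fun ω' => f ω' ^ 2|m] ω) :
    μ[fun ω => condRMSNormalize μ m f ω ^ 2|m] =ᵐ[μ] 1 :=
  (condExp_congr_ae (sq_condRMSNormalize_ae_eq f)).trans
    (condExp_div_condExp_ae_eq_one hm hf.integrable_sq (ae_of_all μ fun ω => sq_nonneg (f ω)) hpos)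

lemma condExp_condRMSNormalize [IsFiniteMeasure μ] (hm : m ≤ mΩ) {f : Ω → ℝ}
    (hf : MemLp f 2 μ) (hpos : ∀ᵐ ω ∂μ, 0 < μ[fun ω' => f ω' ^ 2|m] ω) :
    μ[condRMSNormalize μ m f|m] =ᵐ[μ]
      fun ω => μ[f|m] ω / √(μ[fun ω' => f ω' ^ 2|m] ω) := by
  have hN : condRMSNormalize μ m f = (fun ω => √(μ[fun ω' => f ω' ^ 2|m] ω))⁻¹ * f := by
    ext ω
    simp only [condRMSNormalize, Pi.mul_apply, Pi.inv_apply, div_eq_inv_mul]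
  have hpull := condExp_mul_of_stronglyMeasurable_left (m := m)
    stronglyMeasurable_condExp.measurable.sqrt.inv.stronglyMeasurable
    (hN ▸ (memLp_condRMSNormalize hm hf hpos).integrable one_le_two) (hf.integrable one_le_two)
  rw [hN]
  filter_upwards [hpull] with ω hω
  rw [hω, Pi.mul_apply, Pi.inv_apply, div_eq_inv_mul]

lemma abs_condExp_condRMSNormalize_le_one [IsFiniteMeasure μ] (hm : m ≤ mΩ) {f : Ω → ℝ}
    (hf : MemLp f 2 μ) (hpos : ∀ᵐ ω ∂μ, 0 < μ[fun ω' => f ω' ^ 2|m] ω) :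
    ∀ᵐ ω ∂μ, |μ[condRMSNormalize μ m f|m] ω| ≤ 1 := by
  have hN := memLp_condRMSNormalize hm hf hpos
  have hJensen := (even_two.convexOn_pow (𝕜 := ℝ)).map_condExp_le_of_finiteDimensional hm
    (hN.integrable one_le_two) hN.integrable_sq
  filter_upwards [hJensen, condExp_sq_condRMSNormalize hm hf hpos] with ω hω h1
  rw [← sq_le_one_iff_abs_le_one]
  exact hω.trans_eq h1

end

lemma sum_step_le_of_aiming {ι : Type*} [Fintype ι] {α lam : ℝ} (hα : 0 ≤ α) (hlam : 0 ≤ lam)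
    (hαlam : α * lam < 1) (z s v u : ι → ℝ) (hu : ∀ k, u k ≤ 1) (hv : ∀ k, |v k| ≤ 1)
    (haim : lam * ∑ k, (z k - s k) ^ 2 ≤ ∑ k, (z k - s k) * (v k + lam * z k)) :
    ∑ k, (((1 - α * lam) * z k - s k) ^ 2
        - 2 * α * ((1 - α * lam) * z k - s k) * v k + α ^ 2 * u k)
      ≤ (1 - α * lam) ^ 2 * ∑ k, (z k - s k) ^ 2
        + α ^ 2 * (Fintype.card ι + lam ^ 2 * ∑ k, s k ^ 2 + 2 * lam * ∑ k, |s k|) := by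
  set A := 1 - α * lam
  have hAα : 0 ≤ A * α := mul_nonneg (by linarith) hα
  -- `(z - s) (v + λ z) - λ (z - s)² = (z - s) (v + λ s)` is the cross term of the expansion.
  calc _ ≤ ∑ k, (A ^ 2 * (z k - s k) ^ 2 + α ^ 2 * (1 + lam ^ 2 * s k ^ 2 + 2 * lam * |s k|)
          - 2 * A * α * ((z k - s k) * (v k + lam * z k) - lam * (z k - s k) ^ 2)) := by
        refine Finset.sum_le_sum fun k _ => ?_
        have hsv : s k * v k ≤ |s k| := (le_abs_self _).trans <| by
          rw [abs_mul]
          exact mul_le_of_le_one_right (abs_nonneg _) (hv k)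
        nlinarith [mul_le_mul_of_nonneg_left (hu k) (sq_nonneg α),
          mul_le_mul_of_nonneg_left hsv (by positivity : 0 ≤ 2 * α ^ 2 * lam)]
    _ = A ^ 2 * ∑ k, (z k - s k) ^ 2
          + α ^ 2 * (Fintype.card ι + lam ^ 2 * ∑ k, s k ^ 2 + 2 * lam * ∑ k, |s k|)
          - 2 * A * α * (∑ k, (z k - s k) * (v k + lam * z k) - lam * ∑ k, (z k - s k) ^ 2) := by
        simp only [Finset.sum_sub_distrib, Finset.sum_add_distrib, ← Finset.mul_sum,
          Finset.sum_const, Finset.card_univ, nsmul_eq_mul, mul_one]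
    _ ≤ _ := by nlinarith [mul_nonneg hAα (sub_nonneg.2 haim)]

theorem bcosw_one_step_contraction_general
    {Ω : Type*} {mΩ : MeasurableSpace Ω} {μ : Measure Ω} [IsProbabilityMeasure μ]
    (F : ℕ → MeasurableSpace Ω) (hF_le : ∀ t, F t ≤ mΩ) (hF_mono : Monotone F)
    {n : ℕ} (lam : ℝ) (hlam : 0 ≤ lam)
    (xstar : Fin n → ℝ) (α : ℕ → ℝ)
    (d : ℕ → Ω → Fin n → ℝ)
    (hd_meas : ∀ t k, Measurable[F (t + 1)] fun ω => d t ω k)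
    (hd_sq_int : ∀ t k, Integrable (fun ω => (d t ω k) ^ 2) μ)
    (hd2_pos : ∀ t k, ∀ᵐ ω ∂μ, 0 < (μ[fun ω' => (d t ω' k) ^ 2|F t]) ω)
    (x : ℕ → Ω → Fin n → ℝ)
    (hx0_meas : ∀ k, Measurable[F 0] fun ω => x 0 ω k)
    (hx0_sq_int : ∀ k, Integrable (fun ω => (x 0 ω k) ^ 2) μ)
    (hiter : ∀ t ω k, x (t + 1) ω k
      = (1 - α t * lam) * x t ω k
        - α t * (d t ω k / Real.sqrt ((μ[fun ω' => (d t ω' k) ^ 2|F t]) ω)))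
    (haiming : ∀ t, ∀ᵐ ω ∂μ,
      (∑ k, (x t ω k - xstar k) *
          ((μ[fun ω' => d t ω' k|F t]) ω
              / Real.sqrt ((μ[fun ω' => (d t ω' k) ^ 2|F t]) ω)
            + lam * x t ω k))
        ≥ lam * ∑ k, (x t ω k - xstar k) ^ 2)
    (hα : ∀ t, 0 ≤ α t) (hαlam : ∀ t, α t * lam < 1)
    (Bstar : ℝ)
    (hBstar : Bstar = (n : ℝ) + lam ^ 2 * (∑ k, (xstar k) ^ 2)
        + 2 * lam * ∑ k, |xstar k|) :
    ∀ t, ∀ᵐ ω ∂μ,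
      (μ[fun ω' => ∑ k, (x (t + 1) ω' k - xstar k) ^ 2|F t]) ω
        ≤ (1 - α t * lam) ^ 2 * (∑ k, (x t ω k - xstar k) ^ 2) + (α t) ^ 2 * Bstar := by
  intro t
  have hL2 {m : MeasurableSpace Ω} {f : Ω → ℝ} (hm : m ≤ mΩ) (hf : Measurable[m] f)
      (hf2 : Integrable (fun ω => f ω ^ 2) μ) : MemLp f 2 μ :=
    (memLp_two_iff_integrable_sq (hf.mono hm le_rfl).aestronglyMeasurable).2 hf2
  have hd τ k : MemLp (fun ω => d τ ω k) 2 μ := hL2 (hF_le _) (hd_meas τ k) (hd_sq_int τ k)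
  set D : ℕ → Fin n → Ω → ℝ := fun τ k => condRMSNormalize μ (F τ) fun ω => d τ ω k
  have hD τ k : MemLp (D τ k) 2 μ := memLp_condRMSNormalize (hF_le τ) (hd τ k) (hd2_pos τ k)
  have hx : ∀ k, Measurable[F t] (fun ω => x t ω k) ∧ MemLp (fun ω => x t ω k) 2 μ := fun k =>
    measurable_and_memLp_of_affine_recursion (X := fun τ ω => x τ ω k) (b := α) hF_mono
      (hx0_meas k) (hL2 (hF_le 0) (hx0_meas k) (hx0_sq_int k))
      (fun τ => measurable_condRMSNormalize (hF_mono τ.le_succ) (hd_meas τ k)) (hD · k)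
      (fun τ ω => hiter τ ω k) t
  set Y : Fin n → Ω → ℝ := fun k ω => (1 - α t * lam) * x t ω k - xstar k
  have hYm k : Measurable[F t] (Y k) := ((hx k).1.const_mul _).sub_const _
  have hY k : MemLp (Y k) 2 μ := ((hx k).2.const_mul _).sub (memLp_const _)
  have hnext : (fun ω => ∑ k, (x (t + 1) ω k - xstar k) ^ 2)
      = ∑ k, fun ω => (Y k ω - α t * D t k ω) ^ 2 := by
    ext ω
    simp only [Finset.sum_apply, hiter, Y, D, condRMSNormalize]
    exact Finset.sum_congr rfl fun k _ => by ring
  rw [hnext]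
  filter_upwards [condExp_finsetSum (s := Finset.univ)
      (f := fun k ω => (Y k ω - α t * D t k ω) ^ 2)
      (fun k _ => ((hY k).sub ((hD t k).const_mul (α t))).integrable_sq) (F t),
    ae_all_iff.2 fun k => condExp_sq_sub_const_mul (hF_le t) (hYm k) (hY k) (hD t k) (α t),
    ae_all_iff.2 fun k => condExp_sq_condRMSNormalize (hF_le t) (hd t k) (hd2_pos t k),
    ae_all_iff.2 fun k => abs_condExp_condRMSNormalize_le_one (hF_le t) (hd t k) (hd2_pos t k),
    ae_all_iff.2 fun k => condExp_condRMSNormalize (hF_le t) (hd t k) (hd2_pos t k),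
    haiming t] with ω hsum hstep hu hv hvd haim
  simp only [← hvd] at haim
  rw [hsum, Finset.sum_apply, hBstar]
  simp only [hstep]
  simpa using
    sum_step_le_of_aiming (hα t) hlam (hαlam t) (x t ω) xstar _ _ (fun k => (hu k).le) hv haim

/-- One-step contraction of conceptual BCOSW (Lemma 5.1). -/
theorem bcosw_one_step_contraction
    {Ω : Type*} {mΩ : MeasurableSpace Ω} {μ : Measure Ω} [IsProbabilityMeasure μ]
    (F : ℕ → MeasurableSpace Ω) (hF_le : ∀ t, F t ≤ mΩ) (hF_mono : Monotone F)
    {n : ℕ} (hn : 1 ≤ n) (lam : ℝ) (hlam : 0 ≤ lam)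
    (xstar : Fin n → ℝ) (α : ℕ → ℝ)
    (d : ℕ → Ω → Fin n → ℝ)
    (hd_meas : ∀ t k, Measurable[F (t + 1)] fun ω => d t ω k)
    (hd_sq_int : ∀ t k, Integrable (fun ω => (d t ω k) ^ 2) μ)
    (hd2_pos : ∀ t k, ∀ᵐ ω ∂μ, 0 < (μ[fun ω' => (d t ω' k) ^ 2|F t]) ω)
    (x : ℕ → Ω → Fin n → ℝ)
    (hx0_meas : ∀ k, Measurable[F 0] fun ω => x 0 ω k)
    (hx0_sq_int : ∀ k, Integrable (fun ω => (x 0 ω k) ^ 2) μ)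
    (hiter : ∀ t ω k, x (t + 1) ω k
      = (1 - α t * lam) * x t ω k
        - α t * (d t ω k / Real.sqrt ((μ[fun ω' => (d t ω' k) ^ 2|F t]) ω)))
    (haiming : ∀ t, ∀ᵐ ω ∂μ,
      (∑ k, (x t ω k - xstar k) *
          ((μ[fun ω' => d t ω' k|F t]) ω
              / Real.sqrt ((μ[fun ω' => (d t ω' k) ^ 2|F t]) ω)
            + lam * x t ω k))
        ≥ lam * ∑ k, (x t ω k - xstar k) ^ 2)
    (hα : ∀ t, 0 ≤ α t) (hαlam : ∀ t, α t * lam < 1)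
    (Bstar : ℝ)
    (hBstar : Bstar = (n : ℝ) + lam ^ 2 * (∑ k, (xstar k) ^ 2)
        + 2 * lam * ∑ k, |xstar k|) :
    ∀ t, ∀ᵐ ω ∂μ,
      (μ[fun ω' => ∑ k, (x (t + 1) ω' k - xstar k) ^ 2|F t]) ω
        ≤ (1 - α t * lam) ^ 2 * (∑ k, (x t ω k - xstar k) ^ 2) + (α t) ^ 2 * Bstar :=
  bcosw_one_step_contraction_general F hF_le hF_mono lam hlam xstar α d hd_meas hd_sq_int hd2_pos x
    hx0_meas hx0_sq_int hiter haiming hα hαlam Bstar hBstar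
end

section
/- Robbins–Siegmund almost-supermartingale lemma (Lemma 5.3): Let (Ω, F, P) be a probability space and F_0 ⊆ F_1 ⊆ … a filtration of sub-σ-algebras of F. For each t ≥ 0, let X_t, a_t, b_t, c_t be nonnegative, integrable, F_t-measurable random variables satisfying E[X_{t+1} | F_t] ≤ X_t(1 + a_t) + b_t − c_t almost surely. If Σ_{t=0}^∞ a_t < ∞ and Σ_{t=0}^∞ b_t < ∞ almost surely, then almost surely lim_{t→∞} X_t exists and is finite, and Σ_{t=0}^∞ c_t < ∞. -/
/-!
Dividing by the growth factor `P t = ∏ s < t, (1 + a s)` turns the recursion into a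
supermartingale `W t = X t / P t + ∑ s < t, (c s - b s) / P (s + 1)`, which is bounded below by
`-∑ s < t, b s / P (s + 1)`. Stopped when these partial sums first reach `K`, `W` is a
supermartingale bounded below by `-K`, hence converges a.s.; where `∑ b` converges, `W` agrees
with one of these stopped processes. Since `∑ a < ∞`, `P t` increases to a finite limit, so the
convergence of `W` gives both the convergence of `X` and, as `X ≥ 0`, the summability of `c`.
-/

open MeasureTheory Filter Finset Topology

theorem summable_div_of_one_le {β p : ℕ → ℝ} (hβ : Summable β) (hp : ∀ t, 1 ≤ p t) :
    Summable fun t => β t / p t :=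
  hβ.abs.of_norm_bounded fun t => by
    rw [Real.norm_eq_abs, abs_div, abs_of_pos (one_pos.trans_le (hp t))]
    exact div_le_self (abs_nonneg _) (hp t)

theorem exists_tendsto_and_summable_of_tendsto_div_add_sum {x p β γ : ℕ → ℝ} {P W : ℝ}
    (hx : ∀ t, 0 ≤ x t) (hγ : ∀ t, 0 ≤ γ t) (hβ : Summable β) (hp : ∀ t, 1 ≤ p t)
    (hpP : Tendsto p atTop (𝓝 P))
    (hW : Tendsto (fun t => x t / p t + ∑ s ∈ range t, (γ s - β s) / p (s + 1)) atTop (𝓝 W)) :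
    (∃ L, Tendsto x atTop (𝓝 L)) ∧ Summable γ := by
  have hp0 t : 0 < p t := one_pos.trans_le (hp t)
  have hβp : Summable fun s => β s / p (s + 1) := summable_div_of_one_le hβ fun t => hp _
  have hsplit t : ∑ s ∈ range t, (γ s - β s) / p (s + 1) =
      ∑ s ∈ range t, γ s / p (s + 1) - ∑ s ∈ range t, β s / p (s + 1) := by
    rw [← sum_sub_distrib]; simp only [sub_div]
  obtain ⟨M, hM⟩ := hW.bddAbove_range
  have hγp : Summable fun s => γ s / p (s + 1) := by
    refine summable_of_sum_range_le (c := M + ∑' s, |β s / p (s + 1)|)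
      (fun s => div_nonneg (hγ s) (hp0 _).le) fun t => ?_
    have hWt := hM ⟨t, rfl⟩
    have hβt : ∑ s ∈ range t, β s / p (s + 1) ≤ ∑' s, |β s / p (s + 1)| :=
      (sum_le_sum fun s _ => le_abs_self _).trans
        (hβp.abs.sum_le_tsum _ fun s _ => abs_nonneg _)
    have hxt : 0 ≤ x t / p t := div_nonneg (hx t) (hp0 t).le
    simp only [hsplit] at hWt
    linarith
  obtain ⟨Q, hQ⟩ := hpP.bddAbove_range
  refine ⟨?_, ?_⟩
  · have hxp : Tendsto (fun t => x t / p t) atTop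
        (𝓝 (W - (∑' s, γ s / p (s + 1) - ∑' s, β s / p (s + 1)))) := by
      refine (hW.sub (hγp.hasSum.tendsto_sum_nat.sub hβp.hasSum.tendsto_sum_nat)).congr fun t => ?_
      rw [hsplit]; ring
    exact ⟨_, (hxp.mul hpP).congr fun t => div_mul_cancel₀ _ (hp0 t).ne'⟩
  · refine (hγp.mul_right Q).of_nonneg_of_le hγ fun s => ?_
    calc γ s = γ s / p (s + 1) * p (s + 1) := (div_mul_cancel₀ _ (hp0 _).ne').symm
      _ ≤ γ s / p (s + 1) * Q :=
        mul_le_mul_of_nonneg_left (hQ ⟨s + 1, rfl⟩) (div_nonneg (hγ s) (hp0 _).le)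

namespace MeasureTheory

variable {Ω : Type*} {mΩ : MeasurableSpace Ω} {μ : Measure Ω} {ℱ : Filtration ℕ mΩ}

theorem Supermartingale.exists_ae_tendsto_of_bddBelow [IsFiniteMeasure μ] {f : ℕ → Ω → ℝ}
    (hf : Supermartingale f ℱ μ) {r : ℝ} (hr : ∀ n, ∀ᵐ ω ∂μ, r ≤ f n ω) :
    ∀ᵐ ω ∂μ, ∃ c, Tendsto (fun n => f n ω) atTop (𝓝 c) := by
  have hbdd n : eLpNorm ((-f) n) 1 μ ≤
      ENNReal.ofReal (∫ ω, f 0 ω ∂μ + 2 * |r| * μ.real Set.univ) := by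
    have hint := hf.integrable n
    have hnorm : ∀ᵐ ω ∂μ, ‖f n ω‖ ≤ f n ω + 2 * |r| := by
      filter_upwards [hr n] with ω hω
      rw [Real.norm_eq_abs]
      cases abs_cases (f n ω) <;> cases abs_cases r <;> linarith
    have hmono : ∫ ω, f n ω ∂μ ≤ ∫ ω, f 0 ω ∂μ := by
      simpa only [setIntegral_univ] using hf.setIntegral_le (Nat.zero_le n) MeasurableSet.univ
    rw [Pi.neg_apply, eLpNorm_neg, eLpNorm_one_eq_lintegral_enorm,
      ← ofReal_integral_norm_eq_lintegral_enorm hint]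
    refine ENNReal.ofReal_le_ofReal ((integral_mono_ae (g := fun ω => f n ω + 2 * |r|)
      hint.norm (hint.add (integrable_const _)) hnorm).trans ?_)
    rw [integral_add hint (integrable_const _), integral_const, smul_eq_mul]
    linarith
  filter_upwards [hf.neg.exists_ae_tendsto_of_bdd hbdd] with ω ⟨c, hc⟩
  exact ⟨-c, by simpa using hc.neg⟩

theorem neg_le_stoppedProcess_leastGE {f g : ℕ → Ω → ℝ} {r : ℝ} (hr : 0 ≤ r)
    (hf0 : ∀ ω, 0 ≤ f 0 ω) (hfg : ∀ t ω, -g t ω ≤ f (t + 1) ω) (n : ℕ) (ω : Ω) :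
    -r ≤ stoppedProcess f (leastGE g r) n ω := by
  have hle : ∀ m : ℕ, (m : WithTop ℕ) ≤ leastGE g r ω → -r ≤ f m ω := by
    rintro (_ | k) hk
    · linarith [hf0 ω]
    · have hgk : g k ω < r := by
        simpa using notMem_of_lt_hittingAfter
          ((WithTop.coe_lt_coe.2 k.lt_succ_self).trans_le hk) bot_le
      linarith [hfg k ω]
  rcases le_total (n : WithTop ℕ) (leastGE g r ω) with hn | hn
  · rw [stoppedProcess_eq_of_le (i := n) hn]
    exact hle n hn
  · rw [stoppedProcess_eq_of_ge (i := n) hn]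
    lift leastGE g r ω to ℕ using ne_top_of_le_ne_top WithTop.coe_ne_top hn with m hm
    exact hle m le_rfl

theorem Supermartingale.ae_bddAbove_imp_exists_tendsto [IsFiniteMeasure μ] {f g : ℕ → Ω → ℝ}
    (hf : Supermartingale f ℱ μ) (hg : Adapted ℱ g) (hf0 : ∀ ω, 0 ≤ f 0 ω)
    (hfg : ∀ t ω, -g t ω ≤ f (t + 1) ω) :
    ∀ᵐ ω ∂μ, BddAbove (Set.range fun t => g t ω) → ∃ c, Tendsto (fun t => f t ω) atTop (𝓝 c) := by
  have hstopped (K : ℕ) : Supermartingale (stoppedProcess f (leastGE g K)) ℱ μ := by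
    simpa using (hf.neg.stoppedProcess (hg.stronglyAdapted.isStoppingTime_leastGE (K : ℝ))).neg
  have hconv : ∀ᵐ ω ∂μ, ∀ K : ℕ, ∃ c,
      Tendsto (fun t => stoppedProcess f (leastGE g K) t ω) atTop (𝓝 c) :=
    ae_all_iff.2 fun K => (hstopped K).exists_ae_tendsto_of_bddBelow fun n =>
      ae_of_all _ (neg_le_stoppedProcess_leastGE K.cast_nonneg hf0 hfg n)
  filter_upwards [hconv] with ω hω ⟨B, hB⟩
  obtain ⟨K, hK⟩ := exists_nat_gt B
  have hτ : leastGE g K ω = ⊤ := hittingAfter_eq_top_iff.2 fun t _ =>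
    Set.notMem_Ici.2 ((hB ⟨t, rfl⟩).trans_lt hK)
  simpa only [stoppedProcess_eq_of_le (le_of_le_of_eq le_top hτ.symm)] using hω K

end MeasureTheory

namespace RobbinsSiegmund

variable {Ω : Type*} {mΩ : MeasurableSpace Ω} {μ : Measure Ω} {ℱ : Filtration ℕ mΩ}
  {X a b c : ℕ → Ω → ℝ}

noncomputable def growthFactor (a : ℕ → Ω → ℝ) (t : ℕ) (ω : Ω) : ℝ :=
  ∏ s ∈ range t, (1 + a s ω)

noncomputable def process (X a b c : ℕ → Ω → ℝ) (t : ℕ) (ω : Ω) : ℝ :=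
  X t ω / growthFactor a t ω + ∑ s ∈ range t, (c s ω - b s ω) / growthFactor a (s + 1) ω

theorem one_le_growthFactor (ha : ∀ t ω, 0 ≤ a t ω) (t : ℕ) (ω : Ω) : 1 ≤ growthFactor a t ω :=
  one_le_prod fun s _ => le_add_of_nonneg_right (ha s ω)

theorem growthFactor_succ (t : ℕ) (ω : Ω) :
    growthFactor a (t + 1) ω = growthFactor a t ω * (1 + a t ω) :=
  prod_range_succ _ _

theorem measurable_growthFactor (ha : Adapted ℱ a) {t u : ℕ} (htu : t ≤ u + 1) :
    Measurable[ℱ u] (growthFactor a t) :=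
  Finset.measurable_prod _ fun s hs =>
    measurable_const.add ((ha s).mono (ℱ.mono (by grind)) le_rfl)

theorem measurable_div_growthFactor (ha : Adapted ℱ a) {f : Ω → ℝ} {s t : ℕ}
    (hf : Measurable[ℱ s] f) (hst : s ≤ t) :
    Measurable[ℱ t] fun ω => f ω / growthFactor a (s + 1) ω :=
  (hf.mono (ℱ.mono hst) le_rfl).div (measurable_growthFactor ha (by omega))

theorem integrable_div_growthFactor (ha : Adapted ℱ a) (ha_nonneg : ∀ t ω, 0 ≤ a t ω)
    {f : Ω → ℝ} (hf : Integrable f μ) (t : ℕ) :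
    Integrable (fun ω => f ω / growthFactor a t ω) μ := by
  simp only [div_eq_inv_mul]
  refine hf.bdd_mul (c := 1) ?_ (ae_of_all _ fun ω => ?_)
  · exact ((measurable_growthFactor ha t.le_succ).mono (ℱ.le t) le_rfl).inv.aestronglyMeasurable
  · rw [norm_inv, Real.norm_of_nonneg (zero_le_one.trans (one_le_growthFactor ha_nonneg t ω))]
    exact inv_le_one_of_one_le₀ (one_le_growthFactor ha_nonneg t ω)

theorem adapted_process (hX : Adapted ℱ X) (ha : Adapted ℱ a) (hb : Adapted ℱ b)
    (hc : Adapted ℱ c) : Adapted ℱ (process X a b c) := fun t =>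
  ((hX t).div (measurable_growthFactor ha t.le_succ)).add <| Finset.measurable_sum _ fun s hs =>
    measurable_div_growthFactor ha ((hc s).sub (hb s)) (mem_range.1 hs).le

theorem integrable_process (ha : Adapted ℱ a) (ha_nonneg : ∀ t ω, 0 ≤ a t ω)
    (hX : ∀ t, Integrable (X t) μ) (hb : ∀ t, Integrable (b t) μ) (hc : ∀ t, Integrable (c t) μ)
    (t : ℕ) : Integrable (process X a b c t) μ :=
  (integrable_div_growthFactor ha ha_nonneg (hX t) t).add <| integrable_finsetSum _ fun s _ =>
    integrable_div_growthFactor ha ha_nonneg ((hc s).sub (hb s)) (s + 1)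

theorem neg_sum_le_process (hX : ∀ t ω, 0 ≤ X t ω) (ha : ∀ t ω, 0 ≤ a t ω)
    (hc : ∀ t ω, 0 ≤ c t ω) (t : ℕ) (ω : Ω) :
    -∑ s ∈ range t, b s ω / growthFactor a (s + 1) ω ≤ process X a b c t ω := by
  have hG s : 0 < growthFactor a s ω := one_pos.trans_le (one_le_growthFactor ha s ω)
  rw [process, ← sum_neg_distrib]
  refine le_add_of_nonneg_of_le (div_nonneg (hX t ω) (hG t).le) (sum_le_sum fun s _ => ?_)
  rw [sub_div]
  linarith [div_nonneg (hc s ω) (hG (s + 1)).le]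

theorem process_succ (t : ℕ) (ω : Ω) :
    process X a b c (t + 1) ω = (growthFactor a (t + 1) ω)⁻¹ * X (t + 1) ω +
      ∑ s ∈ range (t + 1), (c s ω - b s ω) / growthFactor a (s + 1) ω := by
  rw [process, div_eq_inv_mul]

theorem process_eq_inv_mul_add (ha : ∀ t ω, 0 ≤ a t ω) (t : ℕ) (ω : Ω) :
    process X a b c t ω = (growthFactor a (t + 1) ω)⁻¹ * (X t ω * (1 + a t ω) + b t ω - c t ω) +
      ∑ s ∈ range (t + 1), (c s ω - b s ω) / growthFactor a (s + 1) ω := by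
  have hG : 0 < growthFactor a t ω := one_pos.trans_le (one_le_growthFactor ha t ω)
  have ha1 : 0 < 1 + a t ω := by linarith [ha t ω]
  rw [process, sum_range_succ, growthFactor_succ]
  field_simp
  ring

theorem supermartingale_process [IsFiniteMeasure μ] (hX : Adapted ℱ X) (ha : Adapted ℱ a)
    (hb : Adapted ℱ b) (hc : Adapted ℱ c) (ha_nonneg : ∀ t ω, 0 ≤ a t ω)
    (hX_int : ∀ t, Integrable (X t) μ) (hb_int : ∀ t, Integrable (b t) μ)
    (hc_int : ∀ t, Integrable (c t) μ)
    (hrec : ∀ t, ∀ᵐ ω ∂μ, μ[X (t + 1)|ℱ t] ω ≤ X t ω * (1 + a t ω) + b t ω - c t ω) :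
    Supermartingale (process X a b c) ℱ μ := by
  refine supermartingale_nat (adapted_process hX ha hb hc).stronglyAdapted
    (integrable_process ha ha_nonneg hX_int hb_int hc_int) fun t => ?_
  set G : Ω → ℝ := fun ω => (growthFactor a (t + 1) ω)⁻¹
  set S : Ω → ℝ := fun ω => ∑ s ∈ range (t + 1), (c s ω - b s ω) / growthFactor a (s + 1) ω
  have hG : StronglyMeasurable[ℱ t] G := (measurable_growthFactor ha le_rfl).inv.stronglyMeasurable
  have hS : StronglyMeasurable[ℱ t] S := (Finset.measurable_sum _ fun s hs =>
    measurable_div_growthFactor ha ((hc s).sub (hb s)) (mem_range_succ_iff.1 hs)).stronglyMeasurable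
  have hGX : Integrable (G * X (t + 1)) μ := by
    have h := integrable_div_growthFactor ha ha_nonneg (hX_int (t + 1)) (t + 1)
    simp only [div_eq_inv_mul] at h
    exact h
  have hS_int : Integrable S μ := integrable_finsetSum _ fun s _ =>
    integrable_div_growthFactor ha ha_nonneg ((hc_int s).sub (hb_int s)) (s + 1)
  have hsplit : process X a b c (t + 1) = G * X (t + 1) + S := funext (process_succ t)
  have hcond : μ[process X a b c (t + 1)|ℱ t] =ᵐ[μ] G * μ[X (t + 1)|ℱ t] + S := by
    rw [hsplit]
    filter_upwards [condExp_add hGX hS_int (ℱ t),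
      condExp_mul_of_stronglyMeasurable_left hG hGX (hX_int (t + 1))] with ω h₁ h₂
    rw [h₁, Pi.add_apply, h₂, condExp_of_stronglyMeasurable (ℱ.le t) hS hS_int, Pi.add_apply]
  filter_upwards [hcond, hrec t] with ω h₁ h₂
  rw [h₁, process_eq_inv_mul_add ha_nonneg t ω]
  exact add_le_add_left (mul_le_mul_of_nonneg_left h₂ (inv_nonneg.2 (zero_le_one.trans
    (one_le_growthFactor ha_nonneg _ ω)))) _

end RobbinsSiegmund

open RobbinsSiegmund

theorem robbins_siegmund_general
    {Ω : Type*} {mΩ : MeasurableSpace Ω} {μ : Measure Ω} [IsProbabilityMeasure μ]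
    (F : ℕ → MeasurableSpace Ω) (hF_le : ∀ t, F t ≤ mΩ) (hF_mono : Monotone F)
    (X a b c : ℕ → Ω → ℝ)
    (hX_meas : ∀ t, Measurable[F t] (X t)) (ha_meas : ∀ t, Measurable[F t] (a t))
    (hb_meas : ∀ t, Measurable[F t] (b t)) (hc_meas : ∀ t, Measurable[F t] (c t))
    (hX_nonneg : ∀ t ω, 0 ≤ X t ω) (ha_nonneg : ∀ t ω, 0 ≤ a t ω)
    (hc_nonneg : ∀ t ω, 0 ≤ c t ω)
    (hX_int : ∀ t, Integrable (X t) μ)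
    (hb_int : ∀ t, Integrable (b t) μ) (hc_int : ∀ t, Integrable (c t) μ)
    (hrec : ∀ t, ∀ᵐ ω ∂μ,
      (μ[X (t + 1)|F t]) ω ≤ X t ω * (1 + a t ω) + b t ω - c t ω)
    (ha_sum : ∀ᵐ ω ∂μ, Summable fun t => a t ω)
    (hb_sum : ∀ᵐ ω ∂μ, Summable fun t => b t ω) :
    ∀ᵐ ω ∂μ,
      (∃ L : ℝ, Tendsto (fun t => X t ω) atTop (nhds L)) ∧
        Summable fun t => c t ω := by
  let ℱ : Filtration ℕ mΩ := ⟨F, hF_mono, hF_le⟩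
  have hW : Supermartingale (process X a b c) ℱ μ :=
    supermartingale_process hX_meas ha_meas hb_meas hc_meas ha_nonneg hX_int hb_int hc_int hrec
  have hβ : Adapted ℱ fun t ω => ∑ s ∈ range (t + 1), b s ω / growthFactor a (s + 1) ω :=
    fun t => Finset.measurable_sum _ fun s hs =>
      measurable_div_growthFactor (ℱ := ℱ) ha_meas (hb_meas s) (mem_range_succ_iff.1 hs)
  have hW0 ω : 0 ≤ process X a b c 0 ω := by simpa [process, growthFactor] using hX_nonneg 0 ω
  filter_upwards [hW.ae_bddAbove_imp_exists_tendsto hβ hW0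
    (fun t => neg_sum_le_process hX_nonneg ha_nonneg hc_nonneg (t + 1)), ha_sum, hb_sum]
    with ω hconv haω hbω
  have hG_one t : 1 ≤ growthFactor a t ω := one_le_growthFactor ha_nonneg t ω
  obtain ⟨_, hWlim⟩ := hconv <|
    ((summable_div_of_one_le hbω fun s => hG_one (s + 1)).hasSum.tendsto_sum_nat.comp
      (tendsto_add_atTop_nat 1)).bddAbove_range
  exact exists_tendsto_and_summable_of_tendsto_div_add_sum (hX_nonneg · ω) (hc_nonneg · ω) hbω
    hG_one (Real.multipliable_one_add_of_summable haω).hasProd.tendsto_prod_nat hWlim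

/-- Robbins–Siegmund almost-supermartingale lemma (Lemma 5.3). -/
theorem robbins_siegmund
    {Ω : Type*} {mΩ : MeasurableSpace Ω} {μ : Measure Ω} [IsProbabilityMeasure μ]
    (F : ℕ → MeasurableSpace Ω) (hF_le : ∀ t, F t ≤ mΩ) (hF_mono : Monotone F)
    (X a b c : ℕ → Ω → ℝ)
    (hX_meas : ∀ t, Measurable[F t] (X t)) (ha_meas : ∀ t, Measurable[F t] (a t))
    (hb_meas : ∀ t, Measurable[F t] (b t)) (hc_meas : ∀ t, Measurable[F t] (c t))
    (hX_nonneg : ∀ t ω, 0 ≤ X t ω) (ha_nonneg : ∀ t ω, 0 ≤ a t ω)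
    (hb_nonneg : ∀ t ω, 0 ≤ b t ω) (hc_nonneg : ∀ t ω, 0 ≤ c t ω)
    (hX_int : ∀ t, Integrable (X t) μ) (ha_int : ∀ t, Integrable (a t) μ)
    (hb_int : ∀ t, Integrable (b t) μ) (hc_int : ∀ t, Integrable (c t) μ)
    (hrec : ∀ t, ∀ᵐ ω ∂μ,
      (μ[X (t + 1)|F t]) ω ≤ X t ω * (1 + a t ω) + b t ω - c t ω)
    (ha_sum : ∀ᵐ ω ∂μ, Summable fun t => a t ω)
    (hb_sum : ∀ᵐ ω ∂μ, Summable fun t => b t ω) :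
    ∀ᵐ ω ∂μ,
      (∃ L : ℝ, Tendsto (fun t => X t ω) atTop (nhds L)) ∧
        Summable fun t => c t ω :=
  robbins_siegmund_general F hF_le hF_mono X a b c hX_meas ha_meas hb_meas hc_meas hX_nonneg
    ha_nonneg hc_nonneg hX_int hb_int hc_int hrec ha_sum hb_sum
end

section
/- Linear convergence to a neighborhood with constant stepsize (Corollary 5.4): Suppose λ > 0, the aiming condition holds, and the stepsizes are constant, α_t = α for all t, with 0 < α·λ < 1. Then for every t ≥ 0, E[‖x_t − x*‖²] ≤ (1 − αλ)^{2t} E[‖x_0 − x*‖²] + α² B* / (1 − (1 − αλ)²). -/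
/-!
With `e = x_t - x*` and `w = d_t / √(E_t[d_t²]) + λ x*`, the update reads
`x_{t+1} - x* = (1 - αλ) e - α w`, so
`E‖x_{t+1} - x*‖² = (1 - αλ)² E‖e‖² - 2α(1 - αλ) E⟨e, w⟩ + α² E‖w‖²`.
Since `e` and `√(E_t[d_t²])` are `F_t`-measurable, the pull-out property turns `E⟨e, w⟩` into
the expectation of the aiming expression minus `λ E‖e‖²`, which is nonnegative. Each normalized
coordinate has second moment at most `1`, whence `E‖w‖² ≤ B*`. Unrolling the resulting recursion
`E‖x_{t+1} - x*‖² ≤ (1 - αλ)² E‖x_t - x*‖² + α² B*` gives the bound.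
-/

open MeasureTheory Filter Topology

theorem eventually_inv_max_inv_nat_add_one_eq {a : ℝ} (ha : 0 < a) :
    ∀ᶠ N : ℕ in atTop, (max a ((N : ℝ) + 1)⁻¹)⁻¹ = a⁻¹ := by
  filter_upwards [(tendsto_one_div_add_atTop_nhds_zero_nat (𝕜 := ℝ)).eventually
    (eventually_le_nhds ha)] with N hN
  rw [max_eq_left (by simpa using hN)]

theorem le_pow_mul_add_div_of_le_mul_add {a : ℕ → ℝ} {r c : ℝ} (hr0 : 0 ≤ r) (hr1 : r < 1)
    (hc : 0 ≤ c) (h : ∀ t, a (t + 1) ≤ r * a t + c) : ∀ t, a t ≤ r ^ t * a 0 + c / (1 - r)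
  | 0 => by
    have : 0 ≤ c / (1 - r) := div_nonneg hc (sub_nonneg.2 hr1.le)
    simpa using this
  | t + 1 => by
    have hr : 1 - r ≠ 0 := (sub_pos.2 hr1).ne'
    calc a (t + 1) ≤ r * a t + c := h t
      _ ≤ r * (r ^ t * a 0 + c / (1 - r)) + c := by
          gcongr; exact le_pow_mul_add_div_of_le_mul_add hr0 hr1 hc h t
      _ = r ^ (t + 1) * a 0 + c / (1 - r) := by field_simp; ring

section

variable {Ω : Type*} {m mΩ : MeasurableSpace Ω} {μ : Measure Ω}

theorem integrable_mul_condExp_of_stronglyMeasurable {φ f : Ω → ℝ} (hφ : StronglyMeasurable[m] φ)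
    (hφf : Integrable (fun ω => φ ω * f ω) μ) (hf : Integrable f μ) :
    Integrable (fun ω => φ ω * (μ[f|m]) ω) μ :=
  integrable_condExp.congr (condExp_mul_of_stronglyMeasurable_left hφ hφf hf)

theorem integral_mul_condExp_of_stronglyMeasurable (hm : m ≤ mΩ) [SigmaFinite (μ.trim hm)]
    {φ f : Ω → ℝ} (hφ : StronglyMeasurable[m] φ) (hφf : Integrable (fun ω => φ ω * f ω) μ)
    (hf : Integrable f μ) :
    ∫ ω, φ ω * (μ[f|m]) ω ∂μ = ∫ ω, φ ω * f ω ∂μ :=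
  (integral_congr_ae (condExp_mul_of_stronglyMeasurable_left hφ hφf hf).symm).trans
    (integral_condExp hm)

theorem integrable_and_integral_le_of_tendsto {F : ℕ → Ω → ℝ} {f : Ω → ℝ} {C : ℝ}
    (hF : ∀ N, Integrable (F N) μ) (hF_nonneg : ∀ N, 0 ≤ᵐ[μ] F N)
    (hf : AEStronglyMeasurable f μ)
    (hlim : ∀ᵐ ω ∂μ, Tendsto (fun N => F N ω) atTop (𝓝 (f ω)))
    (hC : ∀ N, ∫ ω, F N ω ∂μ ≤ C) :
    Integrable f μ ∧ ∫ ω, f ω ∂μ ≤ C := by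
  have hf_nonneg : 0 ≤ᵐ[μ] f := by
    filter_upwards [hlim, ae_all_iff.2 hF_nonneg] with ω hω hω_nonneg
    exact ge_of_tendsto' hω hω_nonneg
  have hlintegral : ∫⁻ ω, ENNReal.ofReal (f ω) ∂μ ≤ ENNReal.ofReal C := calc
    ∫⁻ ω, ENNReal.ofReal (f ω) ∂μ
        = ∫⁻ ω, liminf (fun N => ENNReal.ofReal (F N ω)) atTop ∂μ := by
          refine lintegral_congr_ae ?_
          filter_upwards [hlim] with ω hω
          exact ((ENNReal.continuous_ofReal.tendsto _).comp hω).liminf_eq.symm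
    _ ≤ liminf (fun N => ∫⁻ ω, ENNReal.ofReal (F N ω) ∂μ) atTop :=
          lintegral_liminf_le' fun N => (hF N).aemeasurable.ennreal_ofReal
    _ ≤ liminf (fun _ => ENNReal.ofReal C) atTop := by
          refine liminf_le_liminf (Eventually.of_forall fun N => ?_)
          rw [← ofReal_integral_eq_lintegral_ofReal (hF N) (hF_nonneg N)]
          exact ENNReal.ofReal_le_ofReal (hC N)
    _ = ENNReal.ofReal C := liminf_const _
  refine ⟨⟨hf, (hasFiniteIntegral_iff_ofReal hf_nonneg).2
    (hlintegral.trans_lt ENNReal.ofReal_lt_top)⟩, ?_⟩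
  rw [integral_eq_lintegral_of_nonneg_ae hf_nonneg hf]
  exact ENNReal.toReal_le_of_le_ofReal ((integral_nonneg_of_ae (hF_nonneg 0)).trans (hC 0))
    hlintegral

theorem integral_mul_sub_mul_sq {u v : Ω → ℝ} (hu : MemLp u 2 μ) (hv : MemLp v 2 μ) (a b : ℝ) :
    ∫ ω, (a * u ω - b * v ω) ^ 2 ∂μ
      = a ^ 2 * ∫ ω, u ω ^ 2 ∂μ - 2 * a * b * ∫ ω, u ω * v ω ∂μ + b ^ 2 * ∫ ω, v ω ^ 2 ∂μ := by
  have hu2 : Integrable (fun ω => a ^ 2 * u ω ^ 2) μ := hu.integrable_sq.const_mul _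
  have huv : Integrable (fun ω => 2 * a * b * (u ω * v ω)) μ := (hu.integrable_mul hv).const_mul _
  have hv2 : Integrable (fun ω => b ^ 2 * v ω ^ 2) μ := hv.integrable_sq.const_mul _
  have hu2uv : Integrable (fun ω => a ^ 2 * u ω ^ 2 - 2 * a * b * (u ω * v ω)) μ := hu2.sub huv
  have hexpand : (fun ω => (a * u ω - b * v ω) ^ 2) = fun ω =>
      a ^ 2 * u ω ^ 2 - 2 * a * b * (u ω * v ω) + b ^ 2 * v ω ^ 2 := funext fun ω => by ring
  rw [hexpand, integral_add hu2uv hv2, integral_sub hu2 huv,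
    integral_const_mul, integral_const_mul, integral_const_mul]

noncomputable def condNormalized (μ : Measure Ω) (m : MeasurableSpace Ω) (f : Ω → ℝ) (ω : Ω) : ℝ :=
  f ω / Real.sqrt ((μ[fun ω' => f ω' ^ 2|m]) ω)

theorem measurable_condNormalized {m' : MeasurableSpace Ω} (hm : m ≤ m') {f : Ω → ℝ}
    (hf : Measurable[m'] f) : Measurable[m'] (condNormalized μ m f) :=
  hf.div (stronglyMeasurable_condExp.measurable.mono hm le_rfl).sqrt

theorem aestronglyMeasurable_condNormalized (hm : m ≤ mΩ) {f : Ω → ℝ}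
    (hf : AEStronglyMeasurable f μ) : AEStronglyMeasurable (condNormalized μ m f) μ :=
  (hf.aemeasurable.div
    (stronglyMeasurable_condExp.measurable.mono hm le_rfl).sqrt.aemeasurable).aestronglyMeasurable

theorem stronglyMeasurable_div_sqrt_condExp {e f : Ω → ℝ} (he : Measurable[m] e) :
    StronglyMeasurable[m] fun ω => e ω / Real.sqrt ((μ[f|m]) ω) :=
  (he.div stronglyMeasurable_condExp.measurable.sqrt).stronglyMeasurable

variable [IsProbabilityMeasure μ]

/- Truncate the weight `1 / E[f²|m]` to `1 / max (E[f²|m]) (1 / (N + 1))`: against the truncated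
(bounded, `m`-measurable) weight, `f²` and `E[f²|m]` have the same integral, which is at most `1`,
and Fatou's lemma passes to the limit. -/
theorem integrable_condNormalized_sq_and_integral_le_one (hm : m ≤ mΩ) {f : Ω → ℝ}
    (hf : MemLp f 2 μ) (hpos : ∀ᵐ ω ∂μ, 0 < (μ[fun ω' => f ω' ^ 2|m]) ω) :
    Integrable (fun ω => condNormalized μ m f ω ^ 2) μ ∧
      ∫ ω, condNormalized μ m f ω ^ 2 ∂μ ≤ 1 := by
  set g := μ[fun ω' => f ω' ^ 2|m]
  set φ : ℕ → Ω → ℝ := fun N ω => (max (g ω) ((N : ℝ) + 1)⁻¹)⁻¹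
  have hφ_meas : ∀ N, StronglyMeasurable[m] (φ N) := fun N =>
    (stronglyMeasurable_condExp.measurable.max measurable_const).inv.stronglyMeasurable
  have hmax_pos : ∀ (N : ℕ) ω, 0 < max (g ω) ((N : ℝ) + 1)⁻¹ := fun N ω =>
    lt_max_of_lt_right (inv_pos.2 N.cast_add_one_pos)
  have hφ_pos : ∀ N ω, 0 < φ N ω := fun N ω => inv_pos.2 (hmax_pos N ω)
  have hφ_le : ∀ N ω, φ N ω ≤ (N : ℝ) + 1 := fun N ω =>
    inv_le_of_inv_le₀ N.cast_add_one_pos (le_max_right _ _)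
  have hφ_mul_le : ∀ N ω, φ N ω * g ω ≤ 1 := fun N ω =>
    (mul_le_mul_of_nonneg_left (le_max_left _ _) (hφ_pos N ω).le).trans_eq
      (inv_mul_cancel₀ (hmax_pos N ω).ne')
  have hφf : ∀ N, Integrable (fun ω => φ N ω * f ω ^ 2) μ := fun N =>
    hf.integrable_sq.bdd_mul (c := N + 1) ((hφ_meas N).mono hm).aestronglyMeasurable
      (ae_of_all _ fun ω => by simpa [abs_of_pos (hφ_pos N ω)] using hφ_le N ω)
  refine integrable_and_integral_le_of_tendsto hφf
    (fun N => ae_of_all _ fun ω => by positivity)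
    ((aestronglyMeasurable_condNormalized hm hf.1).pow 2) ?_ fun N => ?_
  · filter_upwards [hpos] with ω hω
    refine tendsto_const_nhds.congr' ?_
    filter_upwards [eventually_inv_max_inv_nat_add_one_eq hω] with N hN
    rw [show φ N ω = (g ω)⁻¹ from hN, condNormalized, div_pow, Real.sq_sqrt hω.le, div_eq_inv_mul]
  · calc ∫ ω, φ N ω * f ω ^ 2 ∂μ = ∫ ω, φ N ω * g ω ∂μ :=
          (integral_mul_condExp_of_stronglyMeasurable hm (hφ_meas N) (hφf N)
            hf.integrable_sq).symm
      _ ≤ ∫ _, 1 ∂μ :=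
          integral_mono (integrable_mul_condExp_of_stronglyMeasurable (hφ_meas N) (hφf N)
            hf.integrable_sq) (integrable_const 1) (hφ_mul_le N)
      _ = 1 := by simp

theorem memLp_condNormalized (hm : m ≤ mΩ) {f : Ω → ℝ} (hf : MemLp f 2 μ)
    (hpos : ∀ᵐ ω ∂μ, 0 < (μ[fun ω' => f ω' ^ 2|m]) ω) : MemLp (condNormalized μ m f) 2 μ :=
  (memLp_two_iff_integrable_sq (aestronglyMeasurable_condNormalized hm hf.1)).2
    (integrable_condNormalized_sq_and_integral_le_one hm hf hpos).1

theorem integral_condNormalized_sq_le_one (hm : m ≤ mΩ) {f : Ω → ℝ} (hf : MemLp f 2 μ)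
    (hpos : ∀ᵐ ω ∂μ, 0 < (μ[fun ω' => f ω' ^ 2|m]) ω) :
    ∫ ω, condNormalized μ m f ω ^ 2 ∂μ ≤ 1 :=
  (integrable_condNormalized_sq_and_integral_le_one hm hf hpos).2

theorem integral_add_const_sq_le {h : Ω → ℝ} (hh : MemLp h 2 μ)
    (hh_le : ∫ ω, h ω ^ 2 ∂μ ≤ 1) (c : ℝ) :
    ∫ ω, (h ω + c) ^ 2 ∂μ ≤ 1 + 2 * |c| + c ^ 2 := by
  have hpointwise : ∀ ω, (h ω + c) ^ 2 ≤ (1 + |c|) * h ω ^ 2 + (|c| + c ^ 2) := fun ω => by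
    have hcross : c * h ω ≤ |c| * |h ω| := (le_abs_self _).trans_eq (abs_mul _ _)
    nlinarith [mul_nonneg (abs_nonneg c) (sq_nonneg (|h ω| - 1)), sq_abs (h ω)]
  calc ∫ ω, (h ω + c) ^ 2 ∂μ ≤ ∫ ω, (1 + |c|) * h ω ^ 2 + (|c| + c ^ 2) ∂μ :=
        integral_mono (hh.add (memLp_const c)).integrable_sq
          ((hh.integrable_sq.const_mul _).add (integrable_const _)) hpointwise
    _ = (1 + |c|) * ∫ ω, h ω ^ 2 ∂μ + (|c| + c ^ 2) := by
        rw [integral_add (hh.integrable_sq.const_mul _) (integrable_const _), integral_const_mul]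
        simp
    _ ≤ 1 + 2 * |c| + c ^ 2 := by nlinarith [abs_nonneg c]

theorem integrable_div_sqrt_condExp_mul (hm : m ≤ mΩ) {e f : Ω → ℝ} (he : MemLp e 2 μ)
    (hf : MemLp f 2 μ) (hpos : ∀ᵐ ω ∂μ, 0 < (μ[fun ω' => f ω' ^ 2|m]) ω) :
    Integrable (fun ω => e ω / Real.sqrt ((μ[fun ω' => f ω' ^ 2|m]) ω) * f ω) μ :=
  (he.integrable_mul (memLp_condNormalized hm hf hpos)).congr
    (ae_of_all _ fun ω => by simp only [Pi.mul_apply, condNormalized]; ring)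

theorem integrable_mul_condExp_div_sqrt (hm : m ≤ mΩ) {e f : Ω → ℝ} (he : Measurable[m] e)
    (he2 : MemLp e 2 μ) (hf : MemLp f 2 μ) (hpos : ∀ᵐ ω ∂μ, 0 < (μ[fun ω' => f ω' ^ 2|m]) ω) :
    Integrable (fun ω => e ω * ((μ[f|m]) ω / Real.sqrt ((μ[fun ω' => f ω' ^ 2|m]) ω))) μ :=
  (integrable_mul_condExp_of_stronglyMeasurable (stronglyMeasurable_div_sqrt_condExp he)
    (integrable_div_sqrt_condExp_mul hm he2 hf hpos) (hf.integrable one_le_two)).congr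
    (ae_of_all _ fun ω => by ring)

theorem integral_mul_condExp_div_sqrt (hm : m ≤ mΩ) {e f : Ω → ℝ} (he : Measurable[m] e)
    (he2 : MemLp e 2 μ) (hf : MemLp f 2 μ) (hpos : ∀ᵐ ω ∂μ, 0 < (μ[fun ω' => f ω' ^ 2|m]) ω) :
    ∫ ω, e ω * ((μ[f|m]) ω / Real.sqrt ((μ[fun ω' => f ω' ^ 2|m]) ω)) ∂μ
      = ∫ ω, e ω * condNormalized μ m f ω ∂μ := by
  have h := integral_mul_condExp_of_stronglyMeasurable hm (stronglyMeasurable_div_sqrt_condExp he)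
    (integrable_div_sqrt_condExp_mul hm he2 hf hpos) (hf.integrable one_le_two)
  simpa only [condNormalized, div_mul_eq_mul_div, mul_div_assoc] using h

theorem integrable_aiming_term (hm : m ≤ mΩ) {X D : Ω → ℝ} (hX : Measurable[m] X)
    (hX2 : MemLp X 2 μ) (hD : MemLp D 2 μ) (hpos : ∀ᵐ ω ∂μ, 0 < (μ[fun ω' => D ω' ^ 2|m]) ω)
    (xs lam : ℝ) :
    Integrable (fun ω => (X ω - xs) *
      ((μ[D|m]) ω / Real.sqrt ((μ[fun ω' => D ω' ^ 2|m]) ω) + lam * X ω)) μ := by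
  have he : MemLp (fun ω => X ω - xs) 2 μ := hX2.sub (memLp_const xs)
  refine ((integrable_mul_condExp_div_sqrt hm (hX.sub_const xs) he hD hpos).add
    ((he.integrable_mul hX2).const_mul lam)).congr (ae_of_all _ fun ω => ?_)
  simp only [Pi.add_apply, Pi.mul_apply]
  ring

theorem integral_aiming_term (hm : m ≤ mΩ) {X D : Ω → ℝ} (hX : Measurable[m] X)
    (hX2 : MemLp X 2 μ) (hD : MemLp D 2 μ) (hpos : ∀ᵐ ω ∂μ, 0 < (μ[fun ω' => D ω' ^ 2|m]) ω)
    (xs lam : ℝ) :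
    ∫ ω, (X ω - xs) * ((μ[D|m]) ω / Real.sqrt ((μ[fun ω' => D ω' ^ 2|m]) ω) + lam * X ω) ∂μ
      = ∫ ω, (X ω - xs) * (condNormalized μ m D ω + lam * xs) ∂μ
        + lam * ∫ ω, (X ω - xs) ^ 2 ∂μ := by
  have he : MemLp (fun ω => X ω - xs) 2 μ := hX2.sub (memLp_const xs)
  have hcond : Integrable (fun ω => (X ω - xs) *
      ((μ[D|m]) ω / Real.sqrt ((μ[fun ω' => D ω' ^ 2|m]) ω))) μ :=
    integrable_mul_condExp_div_sqrt hm (hX.sub_const xs) he hD hpos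
  have hnormalized : Integrable (fun ω => (X ω - xs) * condNormalized μ m D ω) μ :=
    he.integrable_mul (memLp_condNormalized hm hD hpos)
  have hlin : Integrable (fun ω => lam * xs * (X ω - xs)) μ :=
    (he.integrable one_le_two).const_mul _
  have hsq : Integrable (fun ω => lam * (X ω - xs) ^ 2) μ := he.integrable_sq.const_mul _
  have hlin_sq : Integrable (fun ω => lam * xs * (X ω - xs) + lam * (X ω - xs) ^ 2) μ :=
    hlin.add hsq
  have hsplit_lhs : (fun ω => (X ω - xs) *
      ((μ[D|m]) ω / Real.sqrt ((μ[fun ω' => D ω' ^ 2|m]) ω) + lam * X ω)) = fun ω =>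
      (X ω - xs) * ((μ[D|m]) ω / Real.sqrt ((μ[fun ω' => D ω' ^ 2|m]) ω))
        + (lam * xs * (X ω - xs) + lam * (X ω - xs) ^ 2) := funext fun ω => by ring
  have hsplit_rhs : (fun ω => (X ω - xs) * (condNormalized μ m D ω + lam * xs)) = fun ω =>
      (X ω - xs) * condNormalized μ m D ω + lam * xs * (X ω - xs) := funext fun ω => by ring
  rw [hsplit_lhs, hsplit_rhs, integral_add hcond hlin_sq, integral_add hnormalized hlin,
    integral_add hlin hsq, integral_mul_condExp_div_sqrt hm (hX.sub_const xs) he hD hpos,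
    integral_const_mul, integral_const_mul]
  ring

theorem integral_sum_sq_sub_le_of_aiming (hm : m ≤ mΩ) {n : ℕ} {lam α : ℝ} (hlam : 0 ≤ lam)
    (hα : 0 ≤ α) (hαlam : α * lam ≤ 1) (xstar : Fin n → ℝ) {D X X' : Ω → Fin n → ℝ}
    (hD : ∀ k, MemLp (fun ω => D ω k) 2 μ)
    (hpos : ∀ k, ∀ᵐ ω ∂μ, 0 < (μ[fun ω' => D ω' k ^ 2|m]) ω)
    (hX : ∀ k, Measurable[m] fun ω => X ω k) (hX2 : ∀ k, MemLp (fun ω => X ω k) 2 μ)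
    (hiter : ∀ ω k,
      X' ω k = (1 - α * lam) * X ω k - α * condNormalized μ m (fun ω => D ω k) ω)
    (haim : ∀ᵐ ω ∂μ,
      (∑ k, (X ω k - xstar k) * ((μ[fun ω' => D ω' k|m]) ω
          / Real.sqrt ((μ[fun ω' => D ω' k ^ 2|m]) ω) + lam * X ω k))
        ≥ lam * ∑ k, (X ω k - xstar k) ^ 2) :
    ∫ ω, ∑ k, (X' ω k - xstar k) ^ 2 ∂μ
      ≤ (1 - α * lam) ^ 2 * ∫ ω, ∑ k, (X ω k - xstar k) ^ 2 ∂μ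
        + α ^ 2 * (n + lam ^ 2 * ∑ k, xstar k ^ 2 + 2 * lam * ∑ k, |xstar k|) := by
  have he : ∀ k, MemLp (fun ω => X ω k - xstar k) 2 μ := fun k => (hX2 k).sub (memLp_const _)
  have hw : ∀ k, MemLp (fun ω => condNormalized μ m (fun ω => D ω k) ω + lam * xstar k) 2 μ :=
    fun k => (memLp_condNormalized hm (hD k) (hpos k)).add (memLp_const _)
  have hdecomp : ∀ ω k, X' ω k - xstar k = (1 - α * lam) * (X ω k - xstar k)
      - α * (condNormalized μ m (fun ω => D ω k) ω + lam * xstar k) := fun ω k => by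
    rw [hiter]; ring
  have hcross : 0 ≤ ∑ k, ∫ ω, (X ω k - xstar k) *
      (condNormalized μ m (fun ω => D ω k) ω + lam * xstar k) ∂μ := by
    have h := integral_mono_ae
      ((integrable_finsetSum _ fun k _ => (he k).integrable_sq).const_mul lam)
      (integrable_finsetSum _ fun k _ =>
        integrable_aiming_term hm (hX k) (hX2 k) (hD k) (hpos k) (xstar k) lam) haim
    rw [integral_const_mul, integral_finsetSum _ fun k _ => (he k).integrable_sq,
      integral_finsetSum _ fun k _ =>
        integrable_aiming_term hm (hX k) (hX2 k) (hD k) (hpos k) (xstar k) lam] at h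
    simp only [integral_aiming_term hm (hX _) (hX2 _) (hD _) (hpos _), Finset.sum_add_distrib,
      ← Finset.mul_sum] at h
    linarith
  have hnoise : ∑ k, ∫ ω, (condNormalized μ m (fun ω => D ω k) ω + lam * xstar k) ^ 2 ∂μ
      ≤ n + lam ^ 2 * ∑ k, xstar k ^ 2 + 2 * lam * ∑ k, |xstar k| := calc
    _ ≤ ∑ k : Fin n, (1 + 2 * |lam * xstar k| + (lam * xstar k) ^ 2) :=
        Finset.sum_le_sum fun k _ => integral_add_const_sq_le
          (memLp_condNormalized hm (hD k) (hpos k))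
          (integral_condNormalized_sq_le_one hm (hD k) (hpos k)) _
    _ = n + lam ^ 2 * ∑ k, xstar k ^ 2 + 2 * lam * ∑ k, |xstar k| := by
        simp only [Finset.sum_add_distrib, abs_mul, abs_of_nonneg hlam, mul_pow, ← Finset.mul_sum]
        simp only [Finset.sum_const, Finset.card_univ, Fintype.card_fin, nsmul_eq_mul, mul_one]
        ring
  have hcoeff : 0 ≤ 2 * (1 - α * lam) * α := by nlinarith
  calc ∫ ω, ∑ k, (X' ω k - xstar k) ^ 2 ∂μ
      = ∑ k, ∫ ω, ((1 - α * lam) * (X ω k - xstar k)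
          - α * (condNormalized μ m (fun ω => D ω k) ω + lam * xstar k)) ^ 2 ∂μ := by
        simp_rw [hdecomp]
        exact integral_finsetSum _ fun k _ =>
          (((he k).const_mul _).sub ((hw k).const_mul _)).integrable_sq
    _ = (1 - α * lam) ^ 2 * ∑ k, ∫ ω, (X ω k - xstar k) ^ 2 ∂μ
        - 2 * (1 - α * lam) * α * ∑ k, ∫ ω, (X ω k - xstar k) *
          (condNormalized μ m (fun ω => D ω k) ω + lam * xstar k) ∂μ
        + α ^ 2 * ∑ k, ∫ ω, (condNormalized μ m (fun ω => D ω k) ω + lam * xstar k) ^ 2 ∂μ := by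
        simp only [integral_mul_sub_mul_sq (he _) (hw _), Finset.sum_add_distrib,
          Finset.sum_sub_distrib, ← Finset.mul_sum]
    _ ≤ (1 - α * lam) ^ 2 * ∑ k, ∫ ω, (X ω k - xstar k) ^ 2 ∂μ
        + α ^ 2 * (n + lam ^ 2 * ∑ k, xstar k ^ 2 + 2 * lam * ∑ k, |xstar k|) := by
        nlinarith [mul_nonneg hcoeff hcross, mul_le_mul_of_nonneg_left hnoise (sq_nonneg α)]
    _ = _ := by rw [integral_finsetSum _ fun k _ => (he k).integrable_sq]

end

theorem bcosw_constant_stepsize_linear_convergence_general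
    {Ω : Type*} {mΩ : MeasurableSpace Ω} {μ : Measure Ω} [IsProbabilityMeasure μ]
    (F : ℕ → MeasurableSpace Ω) (hF_le : ∀ t, F t ≤ mΩ) (hF_mono : Monotone F)
    {n : ℕ} (lam : ℝ) (hlam : 0 < lam)
    (xstar : Fin n → ℝ) (α : ℝ) (hα_pos : 0 < α * lam) (hα_lt : α * lam < 1)
    (d : ℕ → Ω → Fin n → ℝ)
    (hd_meas : ∀ t k, Measurable[F (t + 1)] fun ω => d t ω k)
    (hd_sq_int : ∀ t k, Integrable (fun ω => (d t ω k) ^ 2) μ)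
    (hd2_pos : ∀ t k, ∀ᵐ ω ∂μ, 0 < (μ[fun ω' => (d t ω' k) ^ 2|F t]) ω)
    (x : ℕ → Ω → Fin n → ℝ)
    (hx0_meas : ∀ k, Measurable[F 0] fun ω => x 0 ω k)
    (hx0_sq_int : ∀ k, Integrable (fun ω => (x 0 ω k) ^ 2) μ)
    (hiter : ∀ t ω k, x (t + 1) ω k
      = (1 - α * lam) * x t ω k
        - α * (d t ω k / Real.sqrt ((μ[fun ω' => (d t ω' k) ^ 2|F t]) ω)))
    (haiming : ∀ t, ∀ᵐ ω ∂μ,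
      (∑ k, (x t ω k - xstar k) *
          ((μ[fun ω' => d t ω' k|F t]) ω
              / Real.sqrt ((μ[fun ω' => (d t ω' k) ^ 2|F t]) ω)
            + lam * x t ω k))
        ≥ lam * ∑ k, (x t ω k - xstar k) ^ 2)
    (Bstar : ℝ)
    (hBstar : Bstar = (n : ℝ) + lam ^ 2 * (∑ k, (xstar k) ^ 2)
        + 2 * lam * ∑ k, |xstar k|) :
    ∀ t : ℕ,
      (∫ ω, ∑ k, (x t ω k - xstar k) ^ 2 ∂μ)
        ≤ (1 - α * lam) ^ (2 * t) * (∫ ω, ∑ k, (x 0 ω k - xstar k) ^ 2 ∂μ)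
          + α ^ 2 * Bstar / (1 - (1 - α * lam) ^ 2) := by
  have hα : 0 < α := pos_of_mul_pos_left hα_pos hlam.le
  have hd : ∀ t k, MemLp (fun ω => d t ω k) 2 μ := fun t k =>
    (memLp_two_iff_integrable_sq ((hd_meas t k).mono (hF_le _) le_rfl).aestronglyMeasurable).2
      (hd_sq_int t k)
  have hx : ∀ t, (∀ k, Measurable[F t] fun ω => x t ω k) ∧
      ∀ k, MemLp (fun ω => x t ω k) 2 μ := by
    intro t
    induction t with
    | zero => exact ⟨hx0_meas, fun k => (memLp_two_iff_integrable_sq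
        ((hx0_meas k).mono (hF_le 0) le_rfl).aestronglyMeasurable).2 (hx0_sq_int k)⟩
    | succ t ih =>
      simp_rw [show ∀ k, (fun ω => x (t + 1) ω k) = fun ω => (1 - α * lam) * x t ω k
        - α * condNormalized μ (F t) (fun ω => d t ω k) ω from fun k => funext (hiter t · k)]
      exact ⟨fun k => (measurable_const.mul ((ih.1 k).mono (hF_mono t.le_succ) le_rfl)).sub
          (measurable_const.mul (measurable_condNormalized (hF_mono t.le_succ) (hd_meas t k))),
        fun k => ((ih.2 k).const_mul _).sub
          ((memLp_condNormalized (hF_le t) (hd t k) (hd2_pos t k)).const_mul _)⟩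
  have hstep : ∀ t, ∫ ω, ∑ k, (x (t + 1) ω k - xstar k) ^ 2 ∂μ
      ≤ (1 - α * lam) ^ 2 * ∫ ω, ∑ k, (x t ω k - xstar k) ^ 2 ∂μ + α ^ 2 * Bstar := fun t =>
    hBstar ▸ integral_sum_sq_sub_le_of_aiming (hF_le t) hlam.le hα.le hα_lt.le xstar (hd t)
      (hd2_pos t) (hx t).1 (hx t).2 (hiter t) (haiming t)
  have hBstar_nonneg : 0 ≤ Bstar := by rw [hBstar]; positivity
  have hrate : (1 - α * lam) ^ 2 < 1 := by nlinarith
  intro t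
  simpa only [pow_mul] using le_pow_mul_add_div_of_le_mul_add
    (a := fun t => ∫ ω, ∑ k, (x t ω k - xstar k) ^ 2 ∂μ) (sq_nonneg _) hrate
    (mul_nonneg (sq_nonneg α) hBstar_nonneg) hstep t

/-- Linear convergence to a neighborhood with constant stepsize (Corollary 5.4). -/
theorem bcosw_constant_stepsize_linear_convergence
    {Ω : Type*} {mΩ : MeasurableSpace Ω} {μ : Measure Ω} [IsProbabilityMeasure μ]
    (F : ℕ → MeasurableSpace Ω) (hF_le : ∀ t, F t ≤ mΩ) (hF_mono : Monotone F)
    {n : ℕ} (hn : 1 ≤ n) (lam : ℝ) (hlam : 0 < lam)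
    (xstar : Fin n → ℝ) (α : ℝ) (hα_pos : 0 < α * lam) (hα_lt : α * lam < 1)
    (d : ℕ → Ω → Fin n → ℝ)
    (hd_meas : ∀ t k, Measurable[F (t + 1)] fun ω => d t ω k)
    (hd_sq_int : ∀ t k, Integrable (fun ω => (d t ω k) ^ 2) μ)
    (hd2_pos : ∀ t k, ∀ᵐ ω ∂μ, 0 < (μ[fun ω' => (d t ω' k) ^ 2|F t]) ω)
    (x : ℕ → Ω → Fin n → ℝ)
    (hx0_meas : ∀ k, Measurable[F 0] fun ω => x 0 ω k)
    (hx0_sq_int : ∀ k, Integrable (fun ω => (x 0 ω k) ^ 2) μ)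
    (hiter : ∀ t ω k, x (t + 1) ω k
      = (1 - α * lam) * x t ω k
        - α * (d t ω k / Real.sqrt ((μ[fun ω' => (d t ω' k) ^ 2|F t]) ω)))
    (haiming : ∀ t, ∀ᵐ ω ∂μ,
      (∑ k, (x t ω k - xstar k) *
          ((μ[fun ω' => d t ω' k|F t]) ω
              / Real.sqrt ((μ[fun ω' => (d t ω' k) ^ 2|F t]) ω)
            + lam * x t ω k))
        ≥ lam * ∑ k, (x t ω k - xstar k) ^ 2)
    (Bstar : ℝ)
    (hBstar : Bstar = (n : ℝ) + lam ^ 2 * (∑ k, (xstar k) ^ 2)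
        + 2 * lam * ∑ k, |xstar k|) :
    ∀ t : ℕ,
      (∫ ω, ∑ k, (x t ω k - xstar k) ^ 2 ∂μ)
        ≤ (1 - α * lam) ^ (2 * t) * (∫ ω, ∑ k, (x 0 ω k - xstar k) ^ 2 ∂μ)
          + α ^ 2 * Bstar / (1 - (1 - α * lam) ^ 2) :=
  bcosw_constant_stepsize_linear_convergence_general F hF_le hF_mono lam hlam xstar α hα_pos hα_lt d
    hd_meas hd_sq_int hd2_pos x hx0_meas hx0_sq_int hiter haiming Bstar hBstar
end

section
/- Chung's lemma (Lemma 5.6): Let (X_t)_{t≥1} be a sequence of real numbers such that X_{t+1} ≤ (1 − a/t) X_t + b/t^{p+1} for all t ≥ 1, where a > p > 0 and b > 0. Then there exists a constant C ≥ 0 such that for all t ≥ 1, X_t ≤ (b/(a − p)) · 1/t^p + C · (1/t^{p+1} + 1/t^a). -/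
/-!
The comparison sequence `Y t = b / (a - p) * t ^ (-p) + C * t ^ (-q)`, with `q = min (p + 1) a`,
is a supersolution of the recursion: by the Bernoulli inequality `(1 - s / t) * t ^ (-r) ≤ (t + 1) ^ (-r)`
for `0 ≤ r ≤ s`, the factor `1 - a / t` shrinks `t ^ (-q)` fast enough, and on the `t ^ (-p)` term
the forcing `b / t ^ (p + 1)` is exactly absorbed when the coefficient is `b / (a - p)`.
Once `t ≥ a` the recursion is monotone, so `X ≤ Y` propagates by induction; `C` is chosen
to make `X ≤ Y` hold on the finitely many earlier indices.
-/

theorem one_add_mul_le_rpow_one_add_of_nonpos {s : ℝ} (hs : -1 < s) {p : ℝ} (hp : p ≤ 0) :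
    1 + p * s ≤ (1 + s) ^ p := by
  have hpos : 0 < 1 + s := by linarith
  have hlog : Real.log (1 + s) ≤ s := by linarith [Real.log_le_sub_one_of_pos hpos]
  calc 1 + p * s ≤ 1 + p * Real.log (1 + s) := by linarith [mul_le_mul_of_nonpos_left hlog hp]
    _ ≤ Real.exp (p * Real.log (1 + s)) := by linarith [Real.add_one_le_exp (p * Real.log (1 + s))]
    _ = (1 + s) ^ p := by rw [Real.rpow_def_of_pos hpos, mul_comm]

theorem one_sub_div_mul_one_div_rpow_le {t r s : ℝ} (ht : 0 < t) (hr : 0 ≤ r) (hrs : r ≤ s) :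
    (1 - s / t) * (1 / t ^ r) ≤ 1 / (t + 1) ^ r := by
  have hbern : 1 - s / t ≤ (1 + 1 / t) ^ (-r) := by
    have h := one_add_mul_le_rpow_one_add_of_nonpos (s := 1 / t) (by linarith [one_div_pos.mpr ht])
      (neg_nonpos.mpr hr)
    have : r / t ≤ s / t := by gcongr
    rw [neg_mul, mul_one_div] at h
    linarith
  calc (1 - s / t) * (1 / t ^ r) ≤ (1 + 1 / t) ^ (-r) * t ^ (-r) := by
        rw [Real.rpow_neg ht.le, ← one_div]; gcongr
    _ = 1 / (t + 1) ^ r := by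
        rw [← Real.mul_rpow (by positivity) ht.le, show (1 + 1 / t) * t = t + 1 by field_simp,
          Real.rpow_neg (by positivity), one_div]

theorem one_div_rpow_min_le_add {t : ℝ} (ht : 0 ≤ t) (a b : ℝ) :
    1 / t ^ min a b ≤ 1 / t ^ a + 1 / t ^ b := by
  have ha : 0 ≤ 1 / t ^ a := by positivity
  have hb : 0 ≤ 1 / t ^ b := by positivity
  rcases min_choice a b with h | h <;> rw [h] <;> linarith

theorem le_of_le_of_monotone_recursion {α : Type*} [Preorder α] {X Y : ℕ → α}
    {f : ℕ → α → α} {T : ℕ} (hf : ∀ t, T ≤ t → Monotone (f t))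
    (hX : ∀ t, T ≤ t → X (t + 1) ≤ f t (X t)) (hY : ∀ t, T ≤ t → f t (Y t) ≤ Y (t + 1))
    (hT : X T ≤ Y T) : ∀ t, T ≤ t → X t ≤ Y t := by
  intro t ht
  induction t, ht using Nat.le_induction with
  | base => exact hT
  | succ t ht ih => exact (hX t ht).trans ((hf t ht ih).trans (hY t ht))

theorem Finset.exists_nonneg_forall_le_add_mul {ι : Type*} (s : Finset ι) (X u w : ι → ℝ)
    (hw : ∀ i ∈ s, 0 < w i) : ∃ C, 0 ≤ C ∧ ∀ i ∈ s, X i ≤ u i + C * w i := by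
  obtain ⟨M, hM⟩ := (s.image fun i => (X i - u i) / w i).bddAbove
  refine ⟨max M 0, le_max_right _ _, fun i hi => ?_⟩
  have hi' : (X i - u i) / w i ≤ max M 0 :=
    (hM (Finset.mem_coe.mpr (Finset.mem_image_of_mem _ hi))).trans (le_max_left _ _)
  linarith [(div_le_iff₀ (hw i hi)).mp hi']

theorem chung_recursion_supersolution {a b p q C t : ℝ} (ht : 0 < t) (hp : 0 ≤ p) (hpa : p < a)
    (hb : 0 ≤ b) (hq : 0 ≤ q) (hqa : q ≤ a) (hC : 0 ≤ C) :
    (1 - a / t) * (b / (a - p) * (1 / t ^ p) + C * (1 / t ^ q)) + b / t ^ (p + 1)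
      ≤ b / (a - p) * (1 / (t + 1) ^ p) + C * (1 / (t + 1) ^ q) := by
  have hap : a - p ≠ 0 := (sub_pos.mpr hpa).ne'
  -- the forcing term `b / t ^ (p + 1)` weakens the contraction factor `1 - a / t` to `1 - p / t`
  have hmain : (1 - a / t) * (b / (a - p) * (1 / t ^ p)) + b / t ^ (p + 1)
      = b / (a - p) * ((1 - p / t) * (1 / t ^ p)) := by
    rw [Real.rpow_add ht, Real.rpow_one]
    field_simp
    ring
  calc (1 - a / t) * (b / (a - p) * (1 / t ^ p) + C * (1 / t ^ q)) + b / t ^ (p + 1)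
      = b / (a - p) * ((1 - p / t) * (1 / t ^ p)) + C * ((1 - a / t) * (1 / t ^ q)) := by
        rw [← hmain]; ring
    _ ≤ b / (a - p) * (1 / (t + 1) ^ p) + C * (1 / (t + 1) ^ q) := by
        gcongr
        · exact one_sub_div_mul_one_div_rpow_le ht hp le_rfl
        · exact one_sub_div_mul_one_div_rpow_le ht hq hqa

/-- Chung's lemma (Lemma 5.6). -/
theorem chung_lemma
    (X : ℕ → ℝ) (a b p : ℝ) (hap : a > p) (hp : p > 0) (hb : b > 0)
    (hrec : ∀ t : ℕ, 1 ≤ t →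
      X (t + 1) ≤ (1 - a / (t : ℝ)) * X t + b / (t : ℝ) ^ (p + 1)) :
    ∃ C : ℝ, 0 ≤ C ∧ ∀ t : ℕ, 1 ≤ t →
      X t ≤ b / (a - p) * (1 / (t : ℝ) ^ p)
        + C * (1 / (t : ℝ) ^ (p + 1) + 1 / (t : ℝ) ^ a) := by
  set q := min (p + 1) a
  have hq : 0 ≤ q := le_min (by linarith) (by linarith)
  set T := ⌈a⌉₊ + 1
  have haT : a ≤ T := by push_cast [T]; linarith [Nat.le_ceil a]
  obtain ⟨C, hC, hinit⟩ := (Finset.Icc 1 T).exists_nonneg_forall_le_add_mul X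
    (fun t => b / (a - p) * (1 / (t : ℝ) ^ p)) (fun t => 1 / (t : ℝ) ^ q)
    fun t ht => by
      have : (0 : ℝ) < t := by exact_mod_cast (Finset.mem_Icc.mp ht).1
      positivity
  have htail : ∀ t, T ≤ t → X t ≤ b / (a - p) * (1 / (t : ℝ) ^ p) + C * (1 / (t : ℝ) ^ q) := by
    refine le_of_le_of_monotone_recursion (f := fun t x => (1 - a / t) * x + b / (t : ℝ) ^ (p + 1))
      (fun t ht => ?_) (fun t ht => hrec t (by omega)) (fun t ht => ?_)
      (hinit T (Finset.mem_Icc.mpr ⟨by omega, le_rfl⟩))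
    · have : a ≤ t := haT.trans (by exact_mod_cast ht)
      have hcoef : 0 ≤ 1 - a / t := sub_nonneg.mpr ((div_le_one (by linarith)).mpr this)
      exact (monotone_id.const_mul hcoef).add_const _
    · push_cast
      exact chung_recursion_supersolution (by norm_cast; omega) hp.le hap hb.le hq (min_le_right _ _) hC
  refine ⟨C, hC, fun t ht => ?_⟩
  have hbound : X t ≤ b / (a - p) * (1 / (t : ℝ) ^ p) + C * (1 / (t : ℝ) ^ q) := by
    rcases le_or_gt t T with h | h
    · exact hinit t (Finset.mem_Icc.mpr ⟨ht, h⟩)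
    · exact htail t h.le
  have hmin := one_div_rpow_min_le_add (Nat.cast_nonneg t : (0 : ℝ) ≤ t) (p + 1) a
  linarith [mul_le_mul_of_nonneg_left hmin hC]
end

section
/- Chung's fourth lemma (Lemma 5.8): Let (X_t)_{t≥1} be a sequence of nonnegative real numbers such that X_{t+1} ≤ (1 − a_t/t^p) X_t + b/t^q for all t ≥ 1, where 0 < p < 1, p < q, b > 0, and (a_t) is a real sequence with a_t ≥ a > 0 for all t. Then limsup_{t→∞} t^{q−p} X_t ≤ b/a. -/
/-!
Fix `c > b / a` and put `Y t = t ^ (q - p) * X t`. Multiplying the recursion by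
`(t + 1) ^ (q - p) ≤ (1 + K / t) * t ^ (q - p)`, for a constant `K`, gives for large `t`
`Y (t + 1) ≤ (1 - ε t) * max (Y t) c` with `ε t = (a - b / c) / (2 * t ^ p)`; the factor
`1 + K / t` is absorbed because `1 / t = o(t ^ (-p))` when `p < 1`. Hence once `Y` is below `c`
it stays there, and as long as it is above `c` it loses at least `c * ε t` per step, which cannot
go on forever because `∑ t ^ (-p)` diverges. So `limsup Y ≤ c`.
-/

open Filter

theorem Real.one_add_rpow_le_one_add_mul (r : ℝ) {x : ℝ} (hx0 : 0 ≤ x) (hx1 : x ≤ 1) :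
    (1 + x) ^ r ≤ 1 + (2 ^ max r 1 - 1) * x := by
  -- the chord of the convex function `y ↦ y ^ max r 1` over `[1, 2]`
  have hchord := (convexOn_rpow (le_max_right r 1)).2 (x := 1) (y := 2)
    (by norm_num) (by norm_num) (sub_nonneg.2 hx1) hx0 (sub_add_cancel 1 x)
  calc (1 + x) ^ r ≤ (1 + x) ^ max r 1 :=
        Real.rpow_le_rpow_of_exponent_le (by linarith) (le_max_left r 1)
    _ ≤ 1 + (2 ^ max r 1 - 1) * x := by
        simp only [smul_eq_mul, Real.one_rpow, mul_one,
          show 1 - x + x * 2 = 1 + x by ring] at hchord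
        linarith

theorem Real.add_one_rpow_le {t : ℝ} (ht : 1 ≤ t) (r : ℝ) :
    (t + 1) ^ r ≤ (1 + (2 ^ max r 1 - 1) / t) * t ^ r := by
  have ht0 : 0 < t := by linarith
  have hsplit : t + 1 = t * (1 + t⁻¹) := by field_simp
  rw [hsplit, Real.mul_rpow ht0.le (by positivity), mul_comm, div_eq_mul_inv]
  exact mul_le_mul_of_nonneg_right
    (Real.one_add_rpow_le_one_add_mul r (by positivity) (inv_le_one_of_one_le₀ ht))
    (by positivity)

theorem eventually_div_le_div_rpow {p : ℝ} (hp : p < 1) (K : ℝ) {ε : ℝ} (hε : 0 < ε) :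
    ∀ᶠ t : ℕ in atTop, K / t ≤ ε / (t : ℝ) ^ p := by
  have hlim : Tendsto (fun t : ℕ => K * (t : ℝ) ^ (p - 1)) atTop (nhds 0) := by
    simpa [neg_sub] using ((tendsto_rpow_neg_atTop (sub_pos.2 hp)).comp
      tendsto_natCast_atTop_atTop).const_mul K
  filter_upwards [hlim.eventually (eventually_le_nhds hε), eventually_gt_atTop 0]
    with t hKt ht
  have ht' : (0 : ℝ) < t := Nat.cast_pos.2 ht
  rw [Real.rpow_sub_one ht'.ne'] at hKt
  rw [le_div_iff₀ (by positivity)]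
  calc K / t * t ^ p = K * (t ^ p / t) := by ring
    _ ≤ ε := hKt

theorem one_sub_div_mul_add_div_le_mul_max {a b c y τ : ℝ} (hb : 0 ≤ b) (hc : 0 < c)
    (hτ : 0 < τ) (haτ : a ≤ τ) :
    (1 - a / τ) * y + b / τ ≤ (1 - (a - b / c) / τ) * max y c := by
  have hbc : b / τ = b / c / τ * c := by field_simp
  rw [sub_div, sub_sub_eq_add_sub, add_sub_right_comm, add_mul, hbc]
  rcases le_total y c with hyc | hcy
  · have : 0 ≤ 1 - a / τ := by rw [sub_nonneg, div_le_one hτ]; exact haτ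
    rw [max_eq_right hyc]
    linarith [mul_le_mul_of_nonneg_left hyc this]
  · have : 0 ≤ b / c / τ := by positivity
    rw [max_eq_left hcy]
    linarith [mul_le_mul_of_nonneg_left hcy this]

theorem eventually_le_of_le_one_sub_mul_max {Y ε : ℕ → ℝ} {c : ℝ} (hc : 0 < c)
    (hε0 : ∀ t, 0 ≤ ε t) (hε : ¬ Summable ε)
    (hY : ∀ᶠ t in atTop, Y (t + 1) ≤ (1 - ε t) * max (Y t) c) :
    ∀ᶠ t in atTop, Y t ≤ c := by
  obtain ⟨T, hT⟩ := eventually_atTop.1 hY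
  have hstay : ∀ t ≥ T, Y t ≤ c → Y (t + 1) ≤ c := fun t ht hyc => by
    have := hT t ht
    rw [max_eq_right hyc] at this
    nlinarith [hε0 t]
  suffices hreach : ∃ t₀ ≥ T, Y t₀ ≤ c by
    obtain ⟨t₀, ht₀T, ht₀⟩ := hreach
    refine eventually_atTop.2 ⟨t₀, fun t ht => ?_⟩
    induction t, ht using Nat.le_induction with
    | base => exact ht₀
    | succ t ht ih => exact hstay t (ht₀T.trans ht) ih
  by_contra! habove
  have hdrop : ∀ m, Y (m + T) + c * ∑ i ∈ Finset.range m, ε (i + T) ≤ Y T := by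
    intro m
    induction m with
    | zero => simp
    | succ m ih =>
      have hm := hT (m + T) (Nat.le_add_left T m)
      rw [max_eq_left (habove _ (Nat.le_add_left T m)).le] at hm
      rw [Finset.sum_range_succ, Nat.add_right_comm]
      nlinarith [hε0 (m + T), habove _ (Nat.le_add_left T m)]
  refine hε ((summable_nat_add_iff T).1 (summable_of_sum_range_le (fun i => hε0 (i + T))
    (c := Y T / c) fun m => ?_))
  rw [le_div_iff₀ hc, mul_comm]
  linarith [hdrop m, habove (m + T) (Nat.le_add_left T m)]

theorem eventually_rpow_mul_succ_le_one_sub_div_mul_max {X aseq : ℕ → ℝ} {a b c p q : ℝ}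
    (hX : ∀ t, 0 ≤ X t) (hp0 : 0 < p) (hp1 : p < 1) (hb : 0 ≤ b) (hc : 0 < c)
    (hδ : 0 < a - b / c) (haseq : ∀ t, a ≤ aseq t)
    (hrec : ∀ t : ℕ, 1 ≤ t →
      X (t + 1) ≤ (1 - aseq t / (t : ℝ) ^ p) * X t + b / (t : ℝ) ^ q) :
    ∀ᶠ t : ℕ in atTop, ((t + 1 : ℕ) : ℝ) ^ (q - p) * X (t + 1) ≤
      (1 - (a - b / c) / 2 / (t : ℝ) ^ p) * max ((t : ℝ) ^ (q - p) * X t) c := by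
  set δ := a - b / c
  set K : ℝ := 2 ^ max (q - p) 1 - 1
  have hK : 0 ≤ K := sub_nonneg.2 (Real.one_le_rpow one_le_two (by positivity))
  filter_upwards [eventually_div_le_div_rpow hp1 K (half_pos hδ), eventually_ge_atTop 1,
    ((tendsto_rpow_atTop hp0).comp tendsto_natCast_atTop_atTop).eventually_ge_atTop a]
    with t hKt ht (hat : a ≤ (t : ℝ) ^ p)
  have ht' : (1 : ℝ) ≤ t := Nat.one_le_cast.2 ht
  have ht0 : (0 : ℝ) < t := by linarith
  have hτ : (0 : ℝ) < t ^ p := Real.rpow_pos_of_pos ht0 p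
  set M := max ((t : ℝ) ^ (q - p) * X t) c
  have hscaled : (t : ℝ) ^ (q - p) * X (t + 1) ≤
      (1 - a / t ^ p) * ((t : ℝ) ^ (q - p) * X t) + b / t ^ p := by
    have hX' : X (t + 1) ≤ (1 - a / t ^ p) * X t + b / t ^ q :=
      (hrec t ht).trans (by gcongr; exacts [hX t, haseq t])
    have hb' : (t : ℝ) ^ (q - p) * (b / t ^ q) = b / t ^ p := by
      rw [Real.rpow_sub ht0]; field_simp
    calc (t : ℝ) ^ (q - p) * X (t + 1)
        ≤ (t : ℝ) ^ (q - p) * ((1 - a / t ^ p) * X t + b / t ^ q) :=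
          mul_le_mul_of_nonneg_left hX' (by positivity)
      _ = _ := by rw [mul_add, hb']; ring
  have hmax := one_sub_div_mul_add_div_le_mul_max (y := (t : ℝ) ^ (q - p) * X t) hb hc hτ hat
  calc ((t + 1 : ℕ) : ℝ) ^ (q - p) * X (t + 1)
      ≤ (1 + K / t) * ((t : ℝ) ^ (q - p) * X (t + 1)) := by
        rw [← mul_assoc]; push_cast
        exact mul_le_mul_of_nonneg_right (Real.add_one_rpow_le ht' _) (hX _)
    _ ≤ (1 + K / t) * ((1 - δ / t ^ p) * M) :=
        mul_le_mul_of_nonneg_left (hscaled.trans hmax) (by positivity)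
    _ ≤ (1 - δ / 2 / t ^ p) * M := by
        have hv : 0 ≤ δ / t ^ p := by positivity
        have hMc : c ≤ M := le_max_right _ _
        rw [div_div, mul_comm 2, ← div_div] at hKt ⊢
        nlinarith [mul_nonneg (mul_nonneg (by positivity : (0 : ℝ) ≤ K / t) hv)
          (hc.le.trans hMc)]

theorem chung_lemma_four_general
    (X : ℕ → ℝ) (hX_nonneg : ∀ t, 0 ≤ X t)
    (aseq : ℕ → ℝ) (a b p q : ℝ)
    (hp0 : 0 < p) (hp1 : p < 1) (hb : 0 < b) (ha : 0 < a)
    (haseq : ∀ t, a ≤ aseq t)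
    (hrec : ∀ t : ℕ, 1 ≤ t →
      X (t + 1) ≤ (1 - aseq t / (t : ℝ) ^ p) * X t + b / (t : ℝ) ^ q) :
    Filter.limsup (fun t : ℕ => (t : ℝ) ^ (q - p) * X t) atTop ≤ b / a := by
  refine le_of_forall_gt_imp_ge_of_dense fun c hc => ?_
  have hc0 : 0 < c := (div_pos hb ha).trans hc
  have hδ : 0 < a - b / c := sub_pos.2 ((div_lt_comm₀ ha hc0).1 hc)
  have hstep := eventually_rpow_mul_succ_le_one_sub_div_mul_max hX_nonneg hp0 hp1 hb.le hc0
    hδ haseq hrec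
  have hdiv : ¬ Summable fun t : ℕ => (a - b / c) / 2 / (t : ℝ) ^ p := by
    simp_rw [div_eq_mul_inv _ ((_ : ℝ) ^ p), summable_mul_left_iff (half_pos hδ).ne',
      Real.summable_nat_rpow_inv, not_lt]
    exact hp1.le
  exact limsup_le_of_le (isCoboundedUnder_le_of_le atTop (x := 0) fun t =>
    mul_nonneg (Real.rpow_nonneg t.cast_nonneg _) (hX_nonneg t))
    (eventually_le_of_le_one_sub_mul_max hc0 (fun t => by positivity) hdiv hstep)

/-- Chung's fourth lemma (Lemma 5.8). -/
theorem chung_lemma_four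
    (X : ℕ → ℝ) (hX_nonneg : ∀ t, 0 ≤ X t)
    (aseq : ℕ → ℝ) (a b p q : ℝ)
    (hp0 : 0 < p) (hp1 : p < 1) (hpq : p < q) (hb : 0 < b) (ha : 0 < a)
    (haseq : ∀ t, a ≤ aseq t)
    (hrec : ∀ t : ℕ, 1 ≤ t →
      X (t + 1) ≤ (1 - aseq t / (t : ℝ) ^ p) * X t + b / (t : ℝ) ^ q) :
    Filter.limsup (fun t : ℕ => (t : ℝ) ^ (q - p) * X t) atTop ≤ b / a :=
  chung_lemma_four_general X hX_nonneg aseq a b p q hp0 hp1 hb ha haseq hrec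
end

section
/- Extension of Dvoretzky's theorem (Theorem 5.10): Let (Ω, F, P) be a probability space, x* ∈ ℝⁿ, and let (x_t)_{t≥0} and (y_t)_{t≥0} be sequences of ℝⁿ-valued random vectors such that x_{t+1}(ω) = T_t(x_0(ω), …, x_t(ω)) + y_t(ω) for all t ≥ 0, where each T_t : (ℝⁿ)^{t+1} → ℝⁿ is measurable. Suppose there are nonnegative real sequences (a_t), (b_t), (c_t), (h_t) with lim_{t→∞} a_t = a_∞, Σ b_t < ∞, Σ c_t = ∞, Σ h_t < ∞, such that for every t and every tuple (x_0, …, x_t) ∈ (ℝⁿ)^{t+1}: ‖T_t(x_0, …, x_t) − x*‖² ≤ max{ a_t, (1 + b_t)‖x_t − x*‖² − c_t + h_t }. Suppose moreover that E[‖x_0‖²] < ∞, Σ_{t=0}^∞ E[‖y_t‖²] < ∞, and E[y_t | σ(x_0, …, x_t)] = 0 almost surely for every t. Then, with probability one, limsup_{t→∞} ‖x_t − x*‖² ≤ a_∞. -/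
/-!
Write `v t = ‖x t - x*‖²` and `z t = T t (x 0, …, x t) - x*`, so that
`v (t + 1) = ‖z t‖² + 2 ⟪z t, y t⟫ + ‖y t‖²`. Fix a level `α > a∞`. Dividing the cross term
by `max (‖z t‖², α)` gives martingale differences `g t` with `g t ^ 2 ≤ (4 / α) ‖y t‖²`, so
`∑ g t` converges almost surely by the L²-bounded martingale convergence theorem, and so does
`∑ ‖y t‖²`. Pathwise, eventually
`v (t + 1) ≤ max α ((1 + b t) v t - c t + h t) * (1 + g t) + ‖y t‖²`.
Taking logarithms of `max (v t) α` turns the multiplicative noise `1 + g t` into the additive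
noise `log (1 + g t)`, whose partial sums still converge because `∑ g t ^ 2 < ∞`; the summable
perturbations `b t`, `h t`, `‖y t‖²` only shift the logarithm by a bounded amount, and the
divergence of `∑ c t` pushes it below `log α + δ` once, hence forever after. Finally let `α`
decrease to `a∞`.
-/

open MeasureTheory Filter Finset

lemma Real.log_le_log_add_sub_div {x y : ℝ} (hx : 0 < x) (hy : 0 < y) :
    Real.log x ≤ Real.log y + (x - y) / y := by
  have h := Real.log_le_sub_one_of_pos (div_pos hx hy)
  rw [Real.log_div hx.ne' hy.ne', div_sub_one hy.ne'] at h
  linarith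

lemma Real.log_add_le_add_div {x y α : ℝ} (hα : 0 < α) (hx : α ≤ x) (hy : 0 ≤ y) :
    Real.log (x + y) ≤ Real.log x + y / α := by
  have hx₀ := hα.trans_le hx
  calc Real.log (x + y) ≤ Real.log x + (x + y - x) / x :=
        Real.log_le_log_add_sub_div (by positivity) hx₀
    _ ≤ Real.log x + y / α := by
        rw [add_sub_cancel_left]; gcongr

lemma Real.abs_log_one_add_sub_self_le {x : ℝ} (hx : |x| ≤ 1 / 2) :
    |Real.log (1 + x) - x| ≤ 2 * x ^ 2 := by
  obtain ⟨hx₁, hx₂⟩ := abs_le.1 hx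
  have hpos : 0 < 1 + x := by linarith
  have upper : Real.log (1 + x) ≤ x := by linarith [Real.log_le_sub_one_of_pos hpos]
  have hinv : (1 + x)⁻¹ ≤ 1 - x + 2 * x ^ 2 := by
    rw [inv_le_iff_one_le_mul₀ hpos]
    nlinarith [sq_nonneg x]
  have lower : x - 2 * x ^ 2 ≤ Real.log (1 + x) := by
    linarith [Real.one_sub_inv_le_log_of_pos hpos]
  rw [abs_sub_comm, abs_of_nonneg (by linarith)]
  linarith

lemma CauchySeq.eventually_abs_sum_Ico_le {f : ℕ → ℝ}
    (hf : CauchySeq fun N => ∑ i ∈ range N, f i) {d : ℝ} (hd : 0 < d) :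
    ∀ᶠ t₀ in atTop, ∀ N ≥ t₀, |∑ i ∈ Ico t₀ N, f i| ≤ d := by
  obtain ⟨T, hT⟩ := Metric.cauchySeq_iff.1 hf d hd
  filter_upwards [eventually_ge_atTop T] with t₀ ht₀ N hN
  rw [sum_Ico_eq_sub _ hN, ← Real.dist_eq]
  exact (hT N (ht₀.trans hN) t₀ ht₀).le

lemma CauchySeq.sum_range_log_one_add {g : ℕ → ℝ} (hg : CauchySeq fun N => ∑ t ∈ range N, g t)
    (hg2 : Summable fun t => g t ^ 2) :
    CauchySeq fun N => ∑ t ∈ range N, Real.log (1 + g t) := by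
  have hsmall : ∀ᶠ t in cofinite, |g t| ≤ 1 / 2 := by
    filter_upwards [hg2.tendsto_cofinite_zero.eventually
      (eventually_le_nhds (by norm_num : (0 : ℝ) < (1 / 2) ^ 2))] with t ht
    exact abs_le_of_sq_le_sq ht (by norm_num)
  have hsum : Summable fun t => Real.log (1 + g t) - g t :=
    (hg2.mul_left 2).of_norm_bounded_eventually
      (hsmall.mono fun t ht => Real.abs_log_one_add_sub_self_le ht)
  have hsplit : (fun N => ∑ t ∈ range N, Real.log (1 + g t)) =
      (fun N => ∑ t ∈ range N, (Real.log (1 + g t) - g t)) + fun N => ∑ t ∈ range N, g t := by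
    ext N
    simp only [Pi.add_apply, ← sum_add_distrib, sub_add_cancel]
  rw [hsplit]
  exact hsum.hasSum.tendsto_sum_nat.cauchySeq.add hg

lemma not_summable_min_of_not_summable {c : ℕ → ℝ} (hc : ¬ Summable c) {δ : ℝ} (hδ : 0 < δ) :
    ¬ Summable fun t => min (c t) δ := by
  refine fun hs => hc (hs.congr_cofinite ?_)
  rw [Nat.cofinite_eq_atTop]
  filter_upwards [hs.tendsto_atTop_zero.eventually (eventually_lt_nhds hδ)] with t ht
  exact min_eq_left (min_lt_iff.1 ht |>.resolve_right (lt_irrefl δ)).le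

section LogRecursion

variable {ℓ ψ γ β : ℕ → ℝ} {P d : ℝ} {t₀ : ℕ}

lemma le_max_sub_sum_of_log_recursion (hψ : ∀ t, 0 ≤ ψ t) (hβ : ∀ t, 0 ≤ β t)
    (hβd : ∀ N ≥ t₀, ∑ t ∈ Ico t₀ N, β t ≤ d) (hγd : ∀ N ≥ t₀, |∑ t ∈ Ico t₀ N, γ t| ≤ d)
    (hstep : ∀ t ≥ t₀, ℓ (t + 1) ≤ max P (ℓ t - ψ t + γ t) + β t) {N : ℕ} (hN : t₀ ≤ N) :
    ℓ N ≤ max (P + 4 * d) (ℓ t₀ + 2 * d - ∑ t ∈ Ico t₀ N, ψ t) := by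
  have hd : 0 ≤ d := (abs_nonneg _).trans (hγd t₀ le_rfl)
  suffices ℓ N ≤ max (P + 2 * d + ∑ t ∈ Ico t₀ N, β t + ∑ t ∈ Ico t₀ N, γ t)
      (ℓ t₀ + ∑ t ∈ Ico t₀ N, β t - ∑ t ∈ Ico t₀ N, ψ t + ∑ t ∈ Ico t₀ N, γ t) by
    have hγ := (abs_le.1 (hγd N hN)).2
    have hβ := hβd N hN
    exact this.trans (max_le_max (by linarith) (by linarith))
  induction N, hN using Nat.le_induction with
  | base => simp
  | succ N hN ih =>
    have hγ := (abs_le.1 (hγd (N + 1) (by omega))).1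
    have hB : 0 ≤ ∑ t ∈ Ico t₀ N, β t := sum_nonneg fun t _ => hβ t
    simp only [sum_Ico_succ_top hN] at hγ ⊢
    refine (hstep N hN).trans ?_
    rw [← max_add_add_right]
    have := hψ N
    rcases le_max_iff.1 ih with hfloor | hdrift
    · exact max_le (le_max_of_le_left (by linarith)) (le_max_of_le_left (by linarith))
    · exact max_le (le_max_of_le_left (by linarith)) (le_max_of_le_right (by linarith))

lemma exists_le_of_le_max_sub_sum {q : ℕ → ℝ} {A B : ℝ} (hq0 : ∀ t, 0 ≤ q t)
    (hq : ¬ Summable q) (hqψ : ∀ t ≥ t₀, A < ℓ t → q t ≤ ψ t)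
    (hℓ : ∀ N ≥ t₀, ℓ N ≤ max A (B - ∑ t ∈ Ico t₀ N, ψ t)) : ∃ N ≥ t₀, ℓ N ≤ A := by
  by_contra! hlarge
  have hdiv := (not_summable_iff_tendsto_nat_atTop_of_nonneg fun t => hq0 (t + t₀)).1
    ((summable_nat_add_iff t₀).not.2 hq)
  obtain ⟨M, hM⟩ := (hdiv.eventually_ge_atTop (B - A)).exists
  have hψ_sum : B - A ≤ ∑ t ∈ Ico t₀ (t₀ + M), ψ t := by
    rw [sum_Ico_eq_sum_range, Nat.add_sub_cancel_left]
    refine hM.trans (sum_le_sum fun t _ => ?_)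
    rw [add_comm t₀]
    exact hqψ _ (by omega) (hlarge _ (by omega))
  exact (hlarge (t₀ + M) (by omega)).not_ge
    ((hℓ _ (by omega)).trans (max_le le_rfl (by linarith)))

lemma eventually_le_of_log_recursion (hψ : ∀ t, 0 ≤ ψ t) (hβ : ∀ t, 0 ≤ β t)
    (hβs : Summable β) (hγ : CauchySeq fun N => ∑ t ∈ range N, γ t)
    (hstep : ∀ᶠ t in atTop, ℓ (t + 1) ≤ max P (ℓ t - ψ t + γ t) + β t)
    (hψ_large : ∀ R, ∀ δ > 0, ∃ q : ℕ → ℝ, (∀ t, 0 ≤ q t) ∧ ¬ Summable q ∧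
      ∀ᶠ t in atTop, P + δ < ℓ t → ℓ t ≤ R → q t ≤ ψ t) :
    ∀ δ > 0, ∀ᶠ t in atTop, ℓ t ≤ P + δ := by
  -- With `d = δ / 6`: past some time `ℓ` stays below `max (P + 4d) (ℓ t₀ + 2d - ∑ ψ)`, so it is
  -- bounded, must dip below `P + 4d` because `∑ ψ` diverges there, and stays below `P + 6d` after.
  intro δ hδ
  have hd : 0 < δ / 6 := by positivity
  obtain ⟨T, hT⟩ := eventually_atTop.1 <|
    (hβs.hasSum.tendsto_sum_nat.cauchySeq.eventually_abs_sum_Ico_le hd).and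
      ((hγ.eventually_abs_sum_Ico_le hd).and hstep)
  have hbound : ∀ t₀ ≥ T, ∀ N ≥ t₀,
      ℓ N ≤ max (P + 4 * (δ / 6)) (ℓ t₀ + 2 * (δ / 6) - ∑ t ∈ Ico t₀ N, ψ t) :=
    fun t₀ ht₀ N hN => le_max_sub_sum_of_log_recursion hψ hβ
      (fun N hN => (le_abs_self _).trans ((hT t₀ ht₀).1 N hN)) (hT t₀ ht₀).2.1
      (fun t ht => (hT t (ht₀.trans ht)).2.2) hN
  have hℓ_bdd : ∀ N ≥ T, ℓ N ≤ max (P + 4 * (δ / 6)) (ℓ T + 2 * (δ / 6)) := fun N hN =>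
    (hbound T le_rfl N hN).trans (max_le_max le_rfl
      (by linarith [sum_nonneg fun t (_ : t ∈ Ico T N) => hψ t]))
  obtain ⟨q, hq0, hq, hqψ⟩ := hψ_large _ (4 * (δ / 6)) (by positivity)
  obtain ⟨T', hT'⟩ := eventually_atTop.1 hqψ
  obtain ⟨t₁, ht₁, hℓt₁⟩ := exists_le_of_le_max_sub_sum (t₀ := max T T') hq0 hq
    (fun t ht hlarge => hT' t (le_of_max_le_right ht) hlarge (hℓ_bdd t (le_of_max_le_left ht)))
    (hbound _ (le_max_left _ _))
  filter_upwards [eventually_ge_atTop t₁] with N hN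
  refine (hbound t₁ (le_of_max_le_left ht₁) N hN).trans (max_le (by linarith) ?_)
  linarith [sum_nonneg fun t (_ : t ∈ Ico t₁ N) => hψ t]

end LogRecursion

lemma log_max_le_of_le_mul_one_add {α v v' m b c h g Y : ℝ} (hα : 0 < α) (hb : 0 ≤ b)
    (hh : 0 ≤ h) (hY : 0 ≤ Y) (hg : -1 < g)
    (hv' : v' ≤ m * (1 + g) + Y) (hm : m ≤ max α ((1 + b) * v - c + h)) :
    Real.log (max v' α) ≤ max (Real.log α) (Real.log (max v α)
        - min c ((1 + b) * max v α + h - α) / ((1 + b) * max v α + h) + Real.log (1 + g))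
      + (b + h / α + Y / α) := by
  set u := max v α
  set D := (1 + b) * u + h
  set w := D - min c (D - α)
  have hu : α ≤ u := le_max_right v α
  have hbu : α ≤ (1 + b) * u := by nlinarith
  have hD : (1 + b) * u ≤ D := le_add_of_nonneg_right hh
  have hw : α ≤ w := by linarith [min_le_right c (D - α)]
  have hmw : m ≤ w := by
    refine hm.trans (max_le hw ?_)
    have : (1 + b) * v ≤ (1 + b) * u := mul_le_mul_of_nonneg_left (le_max_left v α) (by linarith)
    linarith [min_le_left c (D - α)]
  have hg₀ : 0 < 1 + g := by linarith
  have hmax : max v' α ≤ max α (w * (1 + g)) + Y := by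
    refine max_le ?_ (by linarith [le_max_left α (w * (1 + g))])
    nlinarith [le_max_right α (w * (1 + g))]
  have hlog_max : Real.log (max α (w * (1 + g))) ≤
      max (Real.log α) (Real.log w + Real.log (1 + g)) := by
    rw [← Real.log_mul (by linarith) hg₀.ne']
    rcases max_cases α (w * (1 + g)) with ⟨heq, -⟩ | ⟨heq, -⟩ <;> rw [heq]
    exacts [le_max_left _ _, le_max_right _ _]
  have hlog_w : Real.log w ≤ Real.log D - min c (D - α) / D := by
    have := Real.log_le_log_add_sub_div (by linarith : 0 < w) (by linarith : 0 < D)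
    rwa [show w - D = -min c (D - α) by ring, neg_div, ← sub_eq_add_neg] at this
  have hlog_D : Real.log D ≤ Real.log u + b + h / α := by
    have h1 := Real.log_add_le_add_div hα hbu hh
    have h2 : Real.log (1 + b) ≤ b := by
      linarith [Real.log_le_sub_one_of_pos (by linarith : 0 < 1 + b)]
    rw [Real.log_mul (by linarith) (by linarith)] at h1
    linarith
  calc Real.log (max v' α) ≤ Real.log (max α (w * (1 + g)) + Y) :=
        Real.log_le_log (by positivity) hmax
    _ ≤ Real.log (max α (w * (1 + g))) + Y / α := Real.log_add_le_add_div hα (le_max_left _ _) hY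
    _ ≤ max (Real.log α) (Real.log w + Real.log (1 + g)) + Y / α := by gcongr
    _ ≤ _ := by
      rw [← max_add_add_right, ← max_add_add_right]
      exact max_le_max (by linarith [div_nonneg hh hα.le]) (by linarith)

lemma limsup_le_of_eventually_log_max_le {v : ℕ → ℝ} {α : ℝ} (hα : 0 < α) (hv : ∀ t, 0 ≤ v t)
    (h : ∀ δ > 0, ∀ᶠ t in atTop, Real.log (max (v t) α) ≤ Real.log α + δ) :
    limsup v atTop ≤ α := by
  refine le_of_forall_pos_le_add fun ε hε => limsup_le_of_le (isCoboundedUnder_le_of_le atTop hv) ?_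
  have hαε : 0 < α + ε := by positivity
  filter_upwards [h (Real.log ((α + ε) / α)) (Real.log_pos ((one_lt_div hα).2 (by linarith)))]
    with t ht
  rw [← Real.log_mul hα.ne' (by positivity), mul_div_cancel₀ _ hα.ne',
    Real.log_le_log_iff (by positivity) hαε] at ht
  exact (le_max_left _ _).trans ht

lemma min_div_le_min_sub_div {α δ R u b c h B H : ℝ} (hα : 0 < α) (hu : α ≤ u) (hb : 0 ≤ b)
    (hbB : b ≤ B) (hh : 0 ≤ h) (hhH : h ≤ H) (hc : 0 ≤ c) (hlow : Real.log α + δ < Real.log u)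
    (hhigh : Real.log u ≤ R) :
    min c (α * (Real.exp δ - 1)) / ((1 + B) * Real.exp R + H) ≤
      min c ((1 + b) * u + h - α) / ((1 + b) * u + h) := by
  have hu₀ : 0 < u := hα.trans_le hu
  have hlow' : α * Real.exp δ < u := by
    have := Real.exp_lt_exp.2 hlow
    rwa [Real.exp_add, Real.exp_log hα, Real.exp_log hu₀] at this
  have hhigh' : u ≤ Real.exp R := (Real.log_le_iff_le_exp hu₀).1 hhigh
  have hbu : u ≤ (1 + b) * u := le_mul_of_one_le_left hu₀.le (by linarith)
  have hD : (1 + b) * u + h ≤ (1 + B) * Real.exp R + H := by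
    have : (1 + b) * u ≤ (1 + B) * Real.exp R :=
      mul_le_mul (by linarith) hhigh' hu₀.le (by linarith)
    linarith
  exact div_le_div₀ (le_min hc (by linarith)) (min_le_min le_rfl (by linarith)) (by linarith) hD

theorem limsup_le_of_le_mul_one_add {v m g Y b c h : ℕ → ℝ} {α : ℝ} (hα : 0 < α)
    (hv : ∀ t, 0 ≤ v t) (hY : ∀ t, 0 ≤ Y t) (hb : ∀ t, 0 ≤ b t) (hc : ∀ t, 0 ≤ c t)
    (hh : ∀ t, 0 ≤ h t) (hbs : Summable b) (hhs : Summable h) (hYs : Summable Y)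
    (hcs : ¬ Summable c) (hg : CauchySeq fun N => ∑ t ∈ range N, g t)
    (hg2 : Summable fun t => g t ^ 2)
    (hrec : ∀ t, v (t + 1) ≤ m t * (1 + g t) + Y t)
    (hm : ∀ᶠ t in atTop, m t ≤ max α ((1 + b t) * v t - c t + h t)) :
    limsup v atTop ≤ α := by
  have hD : ∀ t, α ≤ (1 + b t) * max (v t) α + h t := fun t => by
    nlinarith [hb t, hh t, le_max_right (v t) α]
  have hg_gt : ∀ᶠ t in atTop, -1 < g t := by
    filter_upwards [hg2.tendsto_atTop_zero.eventually (eventually_lt_nhds one_pos)] with t ht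
    nlinarith
  refine limsup_le_of_eventually_log_max_le hα hv <| eventually_le_of_log_recursion
    (ψ := fun t => min (c t) ((1 + b t) * max (v t) α + h t - α) / ((1 + b t) * max (v t) α + h t))
    (γ := fun t => Real.log (1 + g t)) (β := fun t => b t + h t / α + Y t / α)
    (fun t => div_nonneg (le_min (hc t) (sub_nonneg.2 (hD t))) (hα.le.trans (hD t)))
    (fun t => by have := hb t; have := hh t; have := hY t; positivity)
    ((hbs.add (hhs.div_const α)).add (hYs.div_const α)) (hg.sum_range_log_one_add hg2) ?_ ?_
  · filter_upwards [hm, hg_gt] with t hmt hgt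
    exact log_max_le_of_le_mul_one_add hα (hb t) (hh t) (hY t) hgt (hrec t) hmt
  · intro R δ hδ
    have hδ' : 0 < α * (Real.exp δ - 1) := mul_pos hα (by linarith [Real.add_one_lt_exp hδ.ne'])
    have hB : 0 < (1 + ∑' t, b t) * Real.exp R + ∑' t, h t := by
      have : 0 ≤ ∑' t, b t := tsum_nonneg hb
      have : 0 ≤ ∑' t, h t := tsum_nonneg hh
      positivity
    exact ⟨fun t => min (c t) (α * (Real.exp δ - 1)) / ((1 + ∑' t, b t) * Real.exp R + ∑' t, h t),
      fun t => div_nonneg (le_min (hc t) hδ'.le) hB.le,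
      (summable_div_const_iff hB.ne').not.2 (not_summable_min_of_not_summable hcs hδ'),
      Eventually.of_forall fun t hlow hhigh => min_div_le_min_sub_div hα (le_max_right _ _) (hb t)
        (hbs.le_tsum t fun j _ => hb j) (hh t) (hhs.le_tsum t fun j _ => hh j) (hc t) hlow hhigh⟩

section

variable {Ω : Type*} {mΩ : MeasurableSpace Ω} {μ : Measure Ω}

lemma integral_mul_eq_zero_of_condExp_eq_zero {m : MeasurableSpace Ω} (hm : m ≤ mΩ)
    [SigmaFinite (μ.trim hm)] {f g : Ω → ℝ} (hf : StronglyMeasurable[m] f)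
    (hfg : Integrable (f * g) μ) (hg : Integrable g μ) (hcond : μ[g|m] =ᵐ[μ] 0) :
    ∫ ω, f ω * g ω ∂μ = 0 := by
  have hpull : μ[f * g|m] =ᵐ[μ] 0 := by
    filter_upwards [condExp_mul_of_stronglyMeasurable_left hf hfg hg, hcond] with ω hfg hg
    rw [hfg, Pi.mul_apply, hg, Pi.zero_apply, mul_zero]
  calc ∫ ω, f ω * g ω ∂μ = ∫ ω, μ[f * g|m] ω ∂μ := (integral_condExp hm).symm
    _ = 0 := by rw [integral_congr_ae hpull, Pi.zero_def, integral_zero]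

lemma condExp_mul_eq_zero_of_bound {m : MeasurableSpace Ω} (hm : m ≤ mΩ) [IsFiniteMeasure μ]
    {f g : Ω → ℝ} (hf : StronglyMeasurable[m] f) {C : ℝ} (hfC : ∀ ω, ‖f ω‖ ≤ C)
    (hg : Integrable g μ) (hcond : μ[g|m] =ᵐ[μ] 0) : μ[f * g|m] =ᵐ[μ] 0 := by
  filter_upwards [condExp_stronglyMeasurable_mul_of_bound hm hf hg C (Eventually.of_forall hfC),
    hcond] with ω hfg hg
  rw [hfg, Pi.mul_apply, hg, Pi.zero_apply, mul_zero]

lemma eLpNorm_one_le_ofReal_one_add_integral_sq [IsProbabilityMeasure μ] {f : Ω → ℝ}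
    (hf : MemLp f 2 μ) : eLpNorm f 1 μ ≤ ENNReal.ofReal (1 + ∫ ω, f ω ^ 2 ∂μ) := by
  have hf₁ := hf.integrable one_le_two
  have hnorm : ∀ ω, ‖f ω‖ ≤ 1 + f ω ^ 2 := fun ω => by
    rw [Real.norm_eq_abs]
    nlinarith [sq_abs (f ω), abs_nonneg (f ω)]
  rw [eLpNorm_one_eq_lintegral_enorm, ← ofReal_integral_norm_eq_lintegral_enorm hf₁]
  have hint : Integrable (fun ω => 1 + f ω ^ 2) μ := (integrable_const 1).add hf.integrable_sq
  refine ENNReal.ofReal_le_ofReal ((integral_mono hf₁.norm hint hnorm).trans_eq ?_)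
  rw [integral_add (integrable_const 1) hf.integrable_sq]
  simp

lemma ae_summable_of_summable_integral {f : ℕ → Ω → ℝ} (hf : ∀ t, Integrable (f t) μ)
    (hf₀ : ∀ t ω, 0 ≤ f t ω) (hsum : Summable fun t => ∫ ω, f t ω ∂μ) :
    ∀ᵐ ω ∂μ, Summable fun t => f t ω := by
  have hnorm : ∀ t, eLpNorm (f t) 1 μ = ENNReal.ofReal (∫ ω, f t ω ∂μ) := fun t => by
    rw [eLpNorm_one_eq_lintegral_enorm, ← ofReal_integral_norm_eq_lintegral_enorm (hf t)]
    simp only [Real.norm_eq_abs, abs_of_nonneg (hf₀ t _)]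
  have htsum : ∑' t, eLpNorm (f t) 1 μ ≠ ⊤ := by
    simp_rw [hnorm]
    rw [← ENNReal.ofReal_tsum_of_nonneg (fun t => integral_nonneg (hf₀ t)) hsum]
    exact ENNReal.ofReal_ne_top
  filter_upwards [summable_norm_of_tsum_eLpNorm_ne_top le_rfl
    (fun t => (hf t).aestronglyMeasurable) htsum] with ω hω
  exact hω.of_norm

section MartingaleDifference

variable [IsProbabilityMeasure μ] {ℱ : Filtration ℕ mΩ} {g : ℕ → Ω → ℝ}

lemma stronglyAdapted_sum_range (hmeas : ∀ t, StronglyMeasurable[ℱ (t + 1)] (g t)) :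
    StronglyAdapted ℱ fun N => ∑ t ∈ range N, g t := fun _ =>
  Finset.stronglyMeasurable_sum _ fun t ht =>
    (hmeas t).mono (ℱ.mono (Nat.succ_le_of_lt (mem_range.1 ht)))

lemma martingale_sum_range (hmeas : ∀ t, StronglyMeasurable[ℱ (t + 1)] (g t))
    (hint : ∀ t, Integrable (g t) μ) (hcond : ∀ t, μ[g t|ℱ t] =ᵐ[μ] 0) :
    Martingale (fun N => ∑ t ∈ range N, g t) ℱ μ :=
  martingale_of_condExp_sub_eq_zero_nat (stronglyAdapted_sum_range hmeas)
    (fun N => integrable_finsetSum' _ fun t _ => hint t)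
    fun N => by simpa only [sum_range_succ_sub_sum] using hcond N

lemma integral_sq_sum_range (hmeas : ∀ t, StronglyMeasurable[ℱ (t + 1)] (g t))
    (hL2 : ∀ t, MemLp (g t) 2 μ) (hcond : ∀ t, μ[g t|ℱ t] =ᵐ[μ] 0) (N : ℕ) :
    ∫ ω, (∑ t ∈ range N, g t) ω ^ 2 ∂μ = ∑ t ∈ range N, ∫ ω, g t ω ^ 2 ∂μ := by
  induction N with
  | zero => simp
  | succ N ih =>
    have hG : MemLp (∑ t ∈ range N, g t) 2 μ := memLp_finsetSum' _ fun t _ => hL2 t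
    have hcross : ∫ ω, (∑ t ∈ range N, g t) ω * g N ω ∂μ = 0 :=
      integral_mul_eq_zero_of_condExp_eq_zero (ℱ.le N) (stronglyAdapted_sum_range hmeas N)
        (hG.integrable_mul (hL2 N)) ((hL2 N).integrable one_le_two) (hcond N)
    have hexpand : ∀ ω, (∑ t ∈ range (N + 1), g t) ω ^ 2 =
        (∑ t ∈ range N, g t) ω ^ 2 + 2 * ((∑ t ∈ range N, g t) ω * g N ω) + g N ω ^ 2 := by
      intro ω
      rw [sum_range_succ, Pi.add_apply]
      ring
    have hcross_int : Integrable (fun ω => 2 * ((∑ t ∈ range N, g t) ω * g N ω)) μ :=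
      (hG.integrable_mul (hL2 N)).const_mul 2
    have hsum_int : Integrable (fun ω => (∑ t ∈ range N, g t) ω ^ 2 +
        2 * ((∑ t ∈ range N, g t) ω * g N ω)) μ := hG.integrable_sq.add hcross_int
    simp_rw [hexpand]
    rw [integral_add hsum_int (hL2 N).integrable_sq,
      integral_add hG.integrable_sq hcross_int, integral_const_mul, hcross, ih, sum_range_succ]
    ring

theorem ae_cauchySeq_sum_range_of_condExp_eq_zero
    (hmeas : ∀ t, StronglyMeasurable[ℱ (t + 1)] (g t)) (hL2 : ∀ t, MemLp (g t) 2 μ)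
    (hcond : ∀ t, μ[g t|ℱ t] =ᵐ[μ] 0) (hsum : Summable fun t => ∫ ω, g t ω ^ 2 ∂μ) :
    ∀ᵐ ω ∂μ, CauchySeq fun N => ∑ t ∈ range N, g t ω := by
  have hbdd : ∀ N, eLpNorm (∑ t ∈ range N, g t) 1 μ ≤
      (1 + ∑' t, ∫ ω, g t ω ^ 2 ∂μ).toNNReal := fun N =>
    (eLpNorm_one_le_ofReal_one_add_integral_sq (memLp_finsetSum' _ fun t _ => hL2 t)).trans
      (ENNReal.ofReal_le_ofReal (by
        rw [integral_sq_sum_range hmeas hL2 hcond]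
        linarith [hsum.sum_le_tsum (range N) fun t _ =>
          integral_nonneg fun ω => sq_nonneg (g t ω)]))
  filter_upwards [((martingale_sum_range hmeas (fun t => (hL2 t).integrable one_le_two)
    hcond).submartingale.exists_ae_tendsto_of_bdd hbdd)] with ω ⟨_, hω⟩
  simpa only [Finset.sum_apply] using hω.cauchySeq

end MartingaleDifference

noncomputable def normalizedCrossTerm {n : ℕ} (θ : ℝ) (z y : Fin n → ℝ) : ℝ :=
  (∑ k, 2 * z k * y k) / max (∑ k, z k ^ 2) θ

section NormalizedCrossTerm

variable {n : ℕ} {θ : ℝ}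

lemma sum_sq_add_le_max_mul_one_add_normalizedCrossTerm (hθ : 0 < θ) (z y : Fin n → ℝ) :
    ∑ k, (z k + y k) ^ 2 ≤
      max (∑ k, z k ^ 2) θ * (1 + normalizedCrossTerm θ z y) + ∑ k, y k ^ 2 := by
  have hmax : 0 < max (∑ k, z k ^ 2) θ := hθ.trans_le (le_max_right _ _)
  have hexpand : ∑ k, (z k + y k) ^ 2 = ∑ k, z k ^ 2 + ∑ k, 2 * z k * y k + ∑ k, y k ^ 2 := by
    simp only [← sum_add_distrib]
    exact sum_congr rfl fun k _ => by ring
  rw [hexpand, normalizedCrossTerm, mul_one_add, mul_div_cancel₀ _ hmax.ne']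
  linarith [le_max_left (∑ k, z k ^ 2) θ]

lemma sq_normalizedCrossTerm_le (hθ : 0 < θ) (z y : Fin n → ℝ) :
    normalizedCrossTerm θ z y ^ 2 ≤ 4 / θ * ∑ k, y k ^ 2 := by
  set w := max (∑ k, z k ^ 2) θ
  have hw : θ ≤ w := le_max_right _ _
  have hzw : ∑ k, z k ^ 2 ≤ w := le_max_left _ _
  have hY : 0 ≤ ∑ k, y k ^ 2 := sum_nonneg fun k _ => sq_nonneg _
  have hCS : (∑ k, 2 * z k * y k) ^ 2 ≤ 4 * (∑ k, z k ^ 2) * ∑ k, y k ^ 2 := by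
    have := sum_mul_sq_le_sq_mul_sq univ (fun k => 2 * z k) y
    simp only [mul_pow, ← mul_sum] at this
    linarith
  rw [normalizedCrossTerm, div_pow, div_le_iff₀ (by positivity)]
  calc (∑ k, 2 * z k * y k) ^ 2 ≤ 4 * w * ∑ k, y k ^ 2 := by nlinarith
    _ ≤ 4 / θ * (∑ k, y k ^ 2) * w ^ 2 := by
      rw [div_mul_eq_mul_div, div_mul_eq_mul_div, le_div_iff₀ hθ]
      nlinarith [mul_le_mul_of_nonneg_left hw (by positivity : 0 ≤ 4 * w * ∑ k, y k ^ 2)]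

lemma normalizedCrossTerm_eq_sum (z y : Fin n → ℝ) :
    normalizedCrossTerm θ z y = ∑ k, 2 * z k / max (∑ j, z j ^ 2) θ * y k := by
  rw [normalizedCrossTerm, sum_div]
  exact sum_congr rfl fun k _ => by ring

lemma abs_two_mul_div_max_le (hθ : 0 < θ) (z : Fin n → ℝ) (k : Fin n) :
    |2 * z k / max (∑ j, z j ^ 2) θ| ≤ 2 * (1 + 1 / θ) := by
  set w := max (∑ j, z j ^ 2) θ
  have hw : θ ≤ w := le_max_right _ _
  have hzw : z k ^ 2 ≤ w :=
    (single_le_sum (fun j _ => sq_nonneg (z j)) (mem_univ k)).trans (le_max_left _ _)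
  have hw₀ : 0 < w := hθ.trans_le hw
  rw [abs_div, abs_mul, abs_two, abs_of_pos hw₀, div_le_iff₀ hw₀]
  have hwθ : 1 ≤ w / θ := (one_le_div hθ).2 hw
  have habs : |z k| ≤ z k ^ 2 + 1 := by nlinarith [sq_abs (z k), abs_nonneg (z k)]
  have : 2 * (1 + 1 / θ) * w = 2 * (w + w / θ) := by ring
  linarith

lemma Measurable.normalizedCrossTerm {α : Type*} {mα : MeasurableSpace α} {z y : α → Fin n → ℝ}
    (hz : Measurable z) (hy : Measurable y) :
    Measurable fun a => normalizedCrossTerm θ (z a) (y a) := by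
  unfold _root_.normalizedCrossTerm
  fun_prop

lemma memLp_two_apply_of_integrable_sum_sq {y : Ω → Fin n → ℝ} (hy : Measurable y)
    (hY : Integrable (fun ω => ∑ k, y ω k ^ 2) μ) (k : Fin n) : MemLp (fun ω => y ω k) 2 μ :=
  have hyk : Measurable fun ω => y ω k := (measurable_pi_apply k).comp hy
  (memLp_two_iff_integrable_sq hyk.aestronglyMeasurable).2 <|
    hY.mono' (hyk.pow_const 2).aestronglyMeasurable <| Eventually.of_forall fun ω => by
      rw [Real.norm_of_nonneg (sq_nonneg _)]
      exact single_le_sum (fun j _ => sq_nonneg (y ω j)) (mem_univ k)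

lemma memLp_normalizedCrossTerm (hθ : 0 < θ) {z y : Ω → Fin n → ℝ} (hz : Measurable z)
    (hy : Measurable y) (hY : Integrable (fun ω => ∑ k, y ω k ^ 2) μ) :
    MemLp (fun ω => normalizedCrossTerm θ (z ω) (y ω)) 2 μ :=
  (memLp_two_iff_integrable_sq (hz.normalizedCrossTerm hy).aestronglyMeasurable).2 <|
    (hY.const_mul (4 / θ)).mono' ((hz.normalizedCrossTerm hy).pow_const 2).aestronglyMeasurable <|
      Eventually.of_forall fun ω => by
        rw [Real.norm_of_nonneg (sq_nonneg _)]
        exact sq_normalizedCrossTerm_le hθ _ _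

lemma condExp_normalizedCrossTerm_eq_zero {m : MeasurableSpace Ω} (hm : m ≤ mΩ)
    [IsFiniteMeasure μ] (hθ : 0 < θ) {z y : Ω → Fin n → ℝ} (hz : Measurable[m] z)
    (hy : ∀ k, Integrable (fun ω => y ω k) μ) (hcond : ∀ k, μ[fun ω => y ω k|m] =ᵐ[μ] 0) :
    μ[fun ω => normalizedCrossTerm θ (z ω) (y ω)|m] =ᵐ[μ] 0 := by
  set φ : Fin n → Ω → ℝ := fun k ω => 2 * z ω k / max (∑ j, z ω j ^ 2) θ
  have hφ : ∀ k, StronglyMeasurable[m] (φ k) := fun k => by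
    apply Measurable.stronglyMeasurable
    fun_prop
  have hφC : ∀ k ω, ‖φ k ω‖ ≤ 2 * (1 + 1 / θ) := fun k ω => abs_two_mul_div_max_le hθ (z ω) k
  have hsplit : (fun ω => normalizedCrossTerm θ (z ω) (y ω)) = ∑ k, φ k * fun ω => y ω k := by
    ext ω
    simp only [normalizedCrossTerm_eq_sum, Finset.sum_apply, Pi.mul_apply, φ]
  have hint : ∀ k, Integrable (φ k * fun ω => y ω k) μ := fun k =>
    (hy k).bdd_mul ((hφ k).mono hm).aestronglyMeasurable (Eventually.of_forall (hφC k))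
  rw [hsplit]
  filter_upwards [condExp_finsetSum (s := univ) (fun k _ => hint k) m,
    ae_all_iff.2 fun k => condExp_mul_eq_zero_of_bound hm (hφ k) (hφC k) (hy k) (hcond k)]
    with ω hsum hterms
  rw [hsum, Finset.sum_apply]
  simp only [hterms, Pi.zero_apply, sum_const_zero]

theorem ae_cauchySeq_sum_range_normalizedCrossTerm [IsProbabilityMeasure μ]
    {ℱ : Filtration ℕ mΩ} (hθ : 0 < θ) {z y : ℕ → Ω → Fin n → ℝ}
    (hz : ∀ t, Measurable[ℱ t] (z t)) (hy : ∀ t, Measurable[ℱ (t + 1)] (y t))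
    (hY : ∀ t, Integrable (fun ω => ∑ k, y t ω k ^ 2) μ)
    (hYs : Summable fun t => ∫ ω, ∑ k, y t ω k ^ 2 ∂μ)
    (hcond : ∀ t k, μ[fun ω => y t ω k|ℱ t] =ᵐ[μ] 0) :
    ∀ᵐ ω ∂μ, CauchySeq fun N => ∑ t ∈ range N, normalizedCrossTerm θ (z t ω) (y t ω) := by
  have hz' : ∀ t, Measurable (z t) := fun t => (hz t).mono (ℱ.le t) le_rfl
  have hy' : ∀ t, Measurable (y t) := fun t => (hy t).mono (ℱ.le (t + 1)) le_rfl
  have hL2 := fun t => memLp_normalizedCrossTerm (μ := μ) hθ (hz' t) (hy' t) (hY t)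
  refine ae_cauchySeq_sum_range_of_condExp_eq_zero (ℱ := ℱ) (fun t => ?_) hL2 (fun t => ?_) ?_
  · exact (((hz t).mono (ℱ.mono t.le_succ) le_rfl).normalizedCrossTerm (hy t)).stronglyMeasurable
  · exact condExp_normalizedCrossTerm_eq_zero (ℱ.le t) hθ (hz t)
      (fun k => (memLp_two_apply_of_integrable_sum_sq (hy' t) (hY t) k).integrable one_le_two)
      (hcond t)
  · refine (hYs.mul_left (4 / θ)).of_nonneg_of_le
      (fun t => integral_nonneg fun ω => sq_nonneg _) fun t => ?_
    rw [← integral_const_mul]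
    exact integral_mono (hL2 t).integrable_sq ((hY t).const_mul _)
      fun ω => sq_normalizedCrossTerm_le hθ _ _

end NormalizedCrossTerm

def historyFiltration {E : Type*} [MeasurableSpace E] (x : ℕ → Ω → E)
    (hx : ∀ t, Measurable (x t)) : Filtration ℕ mΩ where
  seq t := MeasurableSpace.comap (fun ω (i : Fin (t + 1)) => x i ω) inferInstance
  mono' s t hst := by
    have hrestrict : Measurable fun (z : Fin (t + 1) → E) (i : Fin (s + 1)) =>
        z (Fin.castLE (by omega) i) := by fun_prop
    exact (hrestrict.comp (comap_measurable fun ω (i : Fin (t + 1)) => x i ω)).comap_le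
  le' t := (measurable_pi_lambda (fun ω (i : Fin (t + 1)) => x i ω) fun i => hx i).comap_le

lemma measurable_historyFiltration_apply {E : Type*} [MeasurableSpace E] {x : ℕ → Ω → E}
    (hx : ∀ t, Measurable (x t)) (t : ℕ) :
    Measurable[historyFiltration x hx t] fun ω (i : Fin (t + 1)) => x i ω :=
  comap_measurable _

lemma measurable_historyFiltration_self {E : Type*} [MeasurableSpace E] {x : ℕ → Ω → E}
    (hx : ∀ t, Measurable (x t)) (t : ℕ) : Measurable[historyFiltration x hx t] (x t) :=
  (measurable_pi_apply (Fin.last t)).comp (measurable_historyFiltration_apply hx t)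

end

theorem ae_limsup_le_of_eventually_le
    {Ω : Type*} {mΩ : MeasurableSpace Ω} {μ : Measure Ω} [IsProbabilityMeasure μ]
    {n : ℕ} (xstar : Fin n → ℝ) (x y : ℕ → Ω → Fin n → ℝ) (hx_meas : ∀ t, Measurable (x t))
    (T : (t : ℕ) → (Fin (t + 1) → Fin n → ℝ) → Fin n → ℝ) (hT_meas : ∀ t, Measurable (T t))
    (hrec : ∀ t ω, x (t + 1) ω = T t (fun i => x (i : ℕ) ω) + y t ω)
    {a b c h : ℕ → ℝ} {α : ℝ} (hα : 0 < α) (ha : ∀ᶠ t in atTop, a t ≤ α)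
    (hb_nonneg : ∀ t, 0 ≤ b t) (hc_nonneg : ∀ t, 0 ≤ c t) (hh_nonneg : ∀ t, 0 ≤ h t)
    (hb_sum : Summable b) (hc : ¬ Summable c) (hh_sum : Summable h)
    (hT_bound : ∀ t (z : Fin (t + 1) → Fin n → ℝ),
      (∑ k, (T t z k - xstar k) ^ 2)
        ≤ max (a t) ((1 + b t) * (∑ k, (z (Fin.last t) k - xstar k) ^ 2) - c t + h t))
    (hy_int : ∀ t, Integrable (fun ω => ∑ k, (y t ω k) ^ 2) μ)
    (hy_sum : Summable fun t => ∫ ω, ∑ k, (y t ω k) ^ 2 ∂μ)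
    (hy_cond : ∀ t k, μ[fun ω => y t ω k|historyFiltration x hx_meas t] =ᵐ[μ] 0) :
    ∀ᵐ ω ∂μ, limsup (fun t => ∑ k, (x t ω k - xstar k) ^ 2) atTop ≤ α := by
  set ℱ := historyFiltration x hx_meas
  set z : ℕ → Ω → Fin n → ℝ := fun t ω => T t (fun i => x i ω) - xstar
  have hTx : ∀ t, Measurable[ℱ t] fun ω => T t (fun i => x i ω) := fun t =>
    (hT_meas t).comp (measurable_historyFiltration_apply hx_meas t)
  have hy : ∀ t, Measurable[ℱ (t + 1)] (y t) := fun t => by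
    have : y t = fun ω => x (t + 1) ω - T t (fun i => x i ω) :=
      funext fun ω => by rw [hrec]; abel
    rw [this]
    exact (measurable_historyFiltration_self hx_meas (t + 1)).sub
      ((hTx t).mono (ℱ.mono t.le_succ) le_rfl)
  have hY₀ : ∀ t ω, 0 ≤ ∑ k, y t ω k ^ 2 := fun t ω => sum_nonneg fun k _ => sq_nonneg _
  filter_upwards [ae_cauchySeq_sum_range_normalizedCrossTerm hα (fun t => (hTx t).sub_const xstar)
      hy hy_int hy_sum hy_cond, ae_summable_of_summable_integral hy_int hY₀ hy_sum] with ω hg hY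
  refine limsup_le_of_le_mul_one_add hα (fun t => sum_nonneg fun k _ => sq_nonneg _) (hY₀ · ω)
    hb_nonneg hc_nonneg hh_nonneg hb_sum hh_sum hY hc hg
    ((hY.mul_left (4 / α)).of_nonneg_of_le (fun t => sq_nonneg _)
      fun t => sq_normalizedCrossTerm_le hα _ _)
    (m := fun t => max (∑ k, z t ω k ^ 2) α) (fun t => ?_) ?_
  · have hsplit : ∀ k, x (t + 1) ω k - xstar k = z t ω k + y t ω k := fun k => by
      simp only [hrec, z, Pi.add_apply, Pi.sub_apply]
      ring
    simp only [hsplit]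
    exact sum_sq_add_le_max_mul_one_add_normalizedCrossTerm hα _ _
  · filter_upwards [ha] with t hat
    exact max_le ((hT_bound t _).trans (max_le_max hat le_rfl)) (le_max_left _ _)

theorem dvoretzky_extension_general
    {Ω : Type*} {mΩ : MeasurableSpace Ω} {μ : Measure Ω} [IsProbabilityMeasure μ]
    {n : ℕ} (xstar : Fin n → ℝ)
    (x y : ℕ → Ω → Fin n → ℝ)
    (hx_meas : ∀ t, Measurable (x t))
    (T : (t : ℕ) → (Fin (t + 1) → Fin n → ℝ) → Fin n → ℝ)
    (hT_meas : ∀ t, Measurable (T t))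
    (hrec : ∀ t ω, x (t + 1) ω = T t (fun i => x (i : ℕ) ω) + y t ω)
    (a b c h : ℕ → ℝ) (aInf : ℝ)
    (ha_nonneg : ∀ t, 0 ≤ a t) (hb_nonneg : ∀ t, 0 ≤ b t)
    (hc_nonneg : ∀ t, 0 ≤ c t) (hh_nonneg : ∀ t, 0 ≤ h t)
    (ha_lim : Tendsto a atTop (nhds aInf))
    (hb_sum : Summable b)
    (hc_div : Tendsto (fun N => ∑ t ∈ Finset.range N, c t) atTop atTop)
    (hh_sum : Summable h)
    (hT_bound : ∀ t (z : Fin (t + 1) → Fin n → ℝ),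
      (∑ k, (T t z k - xstar k) ^ 2)
        ≤ max (a t)
            ((1 + b t) * (∑ k, (z (Fin.last t) k - xstar k) ^ 2) - c t + h t))
    (hy_int : ∀ t, Integrable (fun ω => ∑ k, (y t ω k) ^ 2) μ)
    (hy_sum : Summable fun t => ∫ ω, ∑ k, (y t ω k) ^ 2 ∂μ)
    (hy_cond : ∀ t k,
      (μ[fun ω => y t ω k|
        MeasurableSpace.comap (fun ω => fun i : Fin (t + 1) => x (i : ℕ) ω)
          inferInstance]) =ᵐ[μ] 0) :
    ∀ᵐ ω ∂μ,
      Filter.limsup (fun t => ∑ k, (x t ω k - xstar k) ^ 2) atTop ≤ aInf := by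
  have haInf : 0 ≤ aInf := ge_of_tendsto' ha_lim ha_nonneg
  have hc : ¬ Summable c := (not_summable_iff_tendsto_nat_atTop_of_nonneg hc_nonneg).2 hc_div
  have hlevel : ∀ m : ℕ, ∀ᵐ ω ∂μ,
      limsup (fun t => ∑ k, (x t ω k - xstar k) ^ 2) atTop ≤ aInf + 1 / (m + 1) := fun m =>
    ae_limsup_le_of_eventually_le xstar x y hx_meas T hT_meas hrec (by positivity)
      (ha_lim.eventually (eventually_le_nhds (by simp only [lt_add_iff_pos_right]; positivity)))
      hb_nonneg hc_nonneg hh_nonneg hb_sum hc hh_sum hT_bound hy_int hy_sum hy_cond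
  filter_upwards [ae_all_iff.2 hlevel] with ω hω
  exact ge_of_tendsto' (by simpa using tendsto_one_div_add_atTop_nhds_zero_nat.const_add aInf) hω

/-- Extension of Dvoretzky's theorem (Theorem 5.10). -/
theorem dvoretzky_extension
    {Ω : Type*} {mΩ : MeasurableSpace Ω} {μ : Measure Ω} [IsProbabilityMeasure μ]
    {n : ℕ} (xstar : Fin n → ℝ)
    (x y : ℕ → Ω → Fin n → ℝ)
    (hx_meas : ∀ t, Measurable (x t)) (hy_meas : ∀ t, Measurable (y t))
    (T : (t : ℕ) → (Fin (t + 1) → Fin n → ℝ) → Fin n → ℝ)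
    (hT_meas : ∀ t, Measurable (T t))
    (hrec : ∀ t ω, x (t + 1) ω = T t (fun i => x (i : ℕ) ω) + y t ω)
    (a b c h : ℕ → ℝ) (aInf : ℝ)
    (ha_nonneg : ∀ t, 0 ≤ a t) (hb_nonneg : ∀ t, 0 ≤ b t)
    (hc_nonneg : ∀ t, 0 ≤ c t) (hh_nonneg : ∀ t, 0 ≤ h t)
    (ha_lim : Tendsto a atTop (nhds aInf))
    (hb_sum : Summable b)
    (hc_div : Tendsto (fun N => ∑ t ∈ Finset.range N, c t) atTop atTop)
    (hh_sum : Summable h)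
    (hT_bound : ∀ t (z : Fin (t + 1) → Fin n → ℝ),
      (∑ k, (T t z k - xstar k) ^ 2)
        ≤ max (a t)
            ((1 + b t) * (∑ k, (z (Fin.last t) k - xstar k) ^ 2) - c t + h t))
    (hx0_int : Integrable (fun ω => ∑ k, (x 0 ω k) ^ 2) μ)
    (hy_int : ∀ t, Integrable (fun ω => ∑ k, (y t ω k) ^ 2) μ)
    (hy_sum : Summable fun t => ∫ ω, ∑ k, (y t ω k) ^ 2 ∂μ)
    (hy_cond : ∀ t k,
      (μ[fun ω => y t ω k|
        MeasurableSpace.comap (fun ω => fun i : Fin (t + 1) => x (i : ℕ) ω)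
          inferInstance]) =ᵐ[μ] 0) :
    ∀ᵐ ω ∂μ,
      Filter.limsup (fun t => ∑ k, (x t ω k - xstar k) ^ 2) atTop ≤ aInf :=
  dvoretzky_extension_general (mΩ := mΩ) xstar x y hx_meas T hT_meas hrec a b c h aInf ha_nonneg
    hb_nonneg hc_nonneg hh_nonneg ha_lim hb_sum hc_div hh_sum hT_bound hy_int hy_sum hy_cond
end

section
/- Convex but not aiming (counterexample, Appendix B): Define f : ℝ² → ℝ by f(x) = (1/2)(x₁ − 2x₂)² (i.e., f(x) = (1/2) xᵀAx with A = [[1, −2], [−2, 4]], which is positive semidefinite). Then f is convex on ℝ² and attains its minimum at x* = (0,0); yet at the point x = (3/2, 1) one has ∇f(x) = (−1/2, 1) and x₁·sign(∂f/∂x₁(x)) + x₂·sign(∂f/∂x₂(x)) = −1/2 < 0, so the coordinate-wise sign-aiming condition ⟨x − x*, sign(∇f(x))⟩ ≥ 0 fails at x. -/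
/-! With `v = (1, -2)`, `f x = ½ ⟪v, x⟫²` is a convex function of a linear form, with gradient
`⟪v, x⟫ • v`. At `x = (3/2, 1)` this is `-½ • v = (-½, 1)`, whose sign pattern `(-, +)` pairs
negatively with `x`. -/

open InnerProductSpace RealInnerProductSpace

section HalfSquaredInner

variable {E : Type*} [NormedAddCommGroup E] [InnerProductSpace ℝ E]

theorem convexOn_half_sq_inner (v : E) :
    ConvexOn ℝ Set.univ fun x : E => (1 / 2) * ⟪v, x⟫ ^ 2 := by
  have hsq : ConvexOn ℝ Set.univ fun t : ℝ => t ^ 2 := Even.convexOn_pow even_two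
  simpa using (hsq.comp_linearMap (innerₗ E v)).smul (by norm_num : (0 : ℝ) ≤ 1 / 2)

theorem hasGradientAt_half_sq_inner [CompleteSpace E] (v x : E) :
    HasGradientAt (fun y : E => (1 / 2) * ⟪v, y⟫ ^ 2) (⟪v, x⟫ • v) x := by
  rw [hasGradientAt_iff_hasFDerivAt]
  refine (((innerSL ℝ v).hasFDerivAt.pow 2).const_mul (1 / 2)).congr_fderiv ?_
  ext y
  simp
  ring

end HalfSquaredInner

theorem inner_one_neg_two (x : EuclideanSpace ℝ (Fin 2)) :
    ⟪!₂[1, -2], x⟫ = x 0 - 2 * x 1 := by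
  simp [PiLp.inner_apply, Fin.sum_univ_two]
  ring

/-- Convex but not aiming (counterexample, Appendix B). -/
theorem convex_but_not_aiming :
    ∀ f : EuclideanSpace ℝ (Fin 2) → ℝ,
      (∀ x, f x = (1 / 2) * (x 0 - 2 * x 1) ^ 2) →
      ∀ xp : EuclideanSpace ℝ (Fin 2), xp 0 = 3 / 2 → xp 1 = 1 →
        ConvexOn ℝ Set.univ f
        ∧ (∀ x, f 0 ≤ f x)
        ∧ gradient f xp 0 = -(1 / 2) ∧ gradient f xp 1 = 1
        ∧ (xp 0 - 0) * Real.sign (gradient f xp 0)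
            + (xp 1 - 0) * Real.sign (gradient f xp 1) = -(1 / 2)
        ∧ (-(1 / 2) : ℝ) < 0 := by
  intro f hf xp h0 h1
  have hf_eq : f = fun x => (1 / 2) * ⟪!₂[1, -2], x⟫ ^ 2 := by
    funext x
    rw [hf, inner_one_neg_two]
  have hgrad : gradient f xp = ⟪!₂[1, -2], xp⟫ • !₂[1, -2] := by
    rw [hf_eq]
    exact (hasGradientAt_half_sq_inner _ xp).gradient
  have hg0 : gradient f xp 0 = -(1 / 2) := by
    simp [hgrad, inner_one_neg_two, h0, h1]
    norm_num
  have hg1 : gradient f xp 1 = 1 := by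
    simp [hgrad, inner_one_neg_two, h0, h1]
    norm_num
  refine ⟨hf_eq ▸ convexOn_half_sq_inner _, fun x => ?_, hg0, hg1, ?_, by norm_num⟩
  · rw [hf x, show f 0 = 0 by simp [hf]]
    positivity
  · rw [hg0, hg1, h0, h1, Real.sign_of_neg (by norm_num), Real.sign_of_pos one_pos]
    norm_num
end
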